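/- arXiv:2006.05823 — 9 statements merged into one kernel-verified Lean document; each statement's English description precedes it below -/
import Mathlib

section
/- For every odd prime p and every integer k ≥ 1, the number of isomorphism classes of paramedial quasigroups admitting an affine form over the cyclic group ℤ/p^k is 2p^k − p^{k−1} + ∑_{i=0}^{k−2} p^i. -/
/-- `op` is a quasigroup operation: all left and right translations are bijective. -/
def IsQuasigroupOp {Q : Type*} (op : Q → Q → Q) : Prop :=
  (∀ a : Q, Function.Bijective fun x => op a x) ∧
  (∀ a : Q, Function.Bijective fun x => op x a)

/-- Isomorphism of binary structures: a bijection commuting with the operations. -/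
def OpIso {A B : Type*} (op₁ : A → A → A) (op₂ : B → B → B) : Prop :=
  ∃ f : A ≃ B, ∀ x y, f (op₁ x y) = op₂ (f x) (f y)

/-- The affine operation `x * y = φ(x) + ψ(y) + c` over an abelian group. -/
def affOp {G : Type*} [AddCommGroup G] (φ ψ : G ≃+ G) (c : G) : G → G → G :=
  fun x y => φ x + ψ y + c

/-- `op` is an affine form of a paramedial quasigroup over `G`:
`op = affOp φ ψ c` for automorphisms with `φ² = ψ²` (Němec–Kepka). -/
def IsAffineParamedialOp {G : Type*} [AddCommGroup G] (op : G → G → G) : Prop :=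
  ∃ (φ ψ : G ≃+ G) (c : G), (∀ x, φ (φ x) = ψ (ψ x)) ∧ op = affOp φ ψ c

/-- `pqG G` is the number of isomorphism classes of paramedial quasigroups
admitting an affine form over `G`. -/
noncomputable def pqG (G : Type*) [AddCommGroup G] : ℕ :=
  Nat.card (Quot fun o₁ o₂ : {op : G → G → G // IsAffineParamedialOp op} =>
    OpIso o₁.1 o₂.1)

/-!
An isomorphism between affine quasigroups `x * y = φ x + ψ y + c` is itself affine, `x ↦ g x + e`
with `g` additive; hence it conjugates `φ` and `ψ` and moves `c` to `g c + (1 - φ - ψ) e`.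
Over `ZMod (p ^ k)` every automorphism is multiplication by a unit, so conjugation is trivial,
and `φ² = ψ²` forces `ψ = ±φ` because `ZMod (p ^ k)` is a local ring in which `2` is invertible.
For `ψ = -φ` the constant can be moved to `0`, leaving one class per unit. For `φ = ψ = a` the
constants up to `c ↦ g c + (1 - 2a) e` are classified by `min (v c) (v (1 - 2a))`, with `v` the
`p`-adic valuation, which gives `v (1 - 2a) + 1` classes. As `a` runs over the units, `1 - 2a`
runs over all elements of positive valuation, so the total is
`2 totient (p ^ k) + ∑ₓ v x = 2 totient (p ^ k) + ∑_{i < k} p ^ i`.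
-/

open Finset

theorem OpIso.refl {A : Type*} (op : A → A → A) : OpIso op op :=
  ⟨Equiv.refl A, fun _ _ => rfl⟩

theorem OpIso.symm {A B : Type*} {op₁ : A → A → A} {op₂ : B → B → B} (h : OpIso op₁ op₂) :
    OpIso op₂ op₁ := by
  obtain ⟨f, hf⟩ := h
  exact ⟨f.symm, fun x y => f.injective (by simp [hf])⟩

theorem OpIso.trans {A B C : Type*} {op₁ : A → A → A} {op₂ : B → B → B} {op₃ : C → C → C}
    (h₁ : OpIso op₁ op₂) (h₂ : OpIso op₂ op₃) : OpIso op₁ op₃ := by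
  obtain ⟨f, hf⟩ := h₁
  obtain ⟨g, hg⟩ := h₂
  exact ⟨f.trans g, fun x y => by simp [hf, hg]⟩

section Affine

variable {G H : Type*} [AddCommGroup G] [AddCommGroup H]

theorem OpIso.map_add_add_map_zero {φ ψ : G ≃+ G} {c : G} {φ' ψ' : H ≃+ H} {c' : H} {f : G ≃ H}
    (hf : ∀ x y, f (affOp φ ψ c x y) = affOp φ' ψ' c' (f x) (f y)) (x y : G) :
    f (x + y) + f 0 = f x + f y := by
  have rectangle : ∀ a a' b b', f (affOp φ ψ c a b) + f (affOp φ ψ c a' b') =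
      f (affOp φ ψ c a b') + f (affOp φ ψ c a' b) := by
    intro a a' b b'
    rw [hf, hf, hf, hf]
    simp only [affOp]
    abel
  -- the four products are `x + y`, `0`, `x` and `y`
  have := rectangle (φ.symm x) 0 (ψ.symm (y - c)) (ψ.symm (-c))
  simp only [affOp, AddEquiv.apply_symm_apply, map_zero] at this
  convert this using 2 <;> abel_nf

theorem opIso_affOp_iff {φ ψ : G ≃+ G} {c : G} {φ' ψ' : H ≃+ H} {c' : H} :
    OpIso (affOp φ ψ c) (affOp φ' ψ' c') ↔
      ∃ (g : G ≃+ H) (e : H), (∀ x, g (φ x) = φ' (g x)) ∧ (∀ x, g (ψ x) = ψ' (g x)) ∧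
        c' = g c + e - φ' e - ψ' e := by
  constructor
  · rintro ⟨f, hf⟩
    let g : G ≃+ H :=
      { f.trans (Equiv.subRight (f 0)) with
        map_add' := fun x y => by
          simp only [Equiv.toFun_as_coe, Equiv.trans_apply, Equiv.subRight_apply]
          linear_combination (norm := abel) OpIso.map_add_add_map_zero hf x y }
    have hfg : ∀ x, f x = g x + f 0 := fun x => (sub_add_cancel _ _).symm
    have key : ∀ x y, g (φ x) + g (ψ y) + g c + f 0 =
        φ' (g x) + ψ' (g y) + φ' (f 0) + ψ' (f 0) + c' := by
      intro x y
      have := hf x y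
      rw [hfg, hfg x, hfg y] at this
      simp only [affOp, map_add] at this
      linear_combination (norm := abel) this
    have key₀ := key 0 0
    simp only [map_zero] at key₀
    refine ⟨g, f 0, fun x => ?_, fun y => ?_, ?_⟩
    · have := key x 0
      simp only [map_zero] at this
      linear_combination (norm := abel) this - key₀
    · have := key 0 y
      simp only [map_zero] at this
      linear_combination (norm := abel) this - key₀
    · linear_combination (norm := abel) -key₀
  · rintro ⟨g, e, hφ, hψ, rfl⟩
    refine ⟨g.toEquiv.trans (Equiv.addRight e), fun x y => ?_⟩
    simp only [affOp, Equiv.trans_apply, AddEquiv.toEquiv_eq_coe, EquivLike.coe_coe,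
      Equiv.coe_addRight, map_add, hφ, hψ]
    abel

end Affine

theorem IsLocalRing.eq_or_eq_neg_of_sq_eq_sq {R : Type*} [CommRing R] [IsLocalRing R]
    (h2 : IsUnit (2 : R)) {u w : R} (hu : IsUnit u) (h : u ^ 2 = w ^ 2) : w = u ∨ w = -u := by
  have hprod : (u - w) * (u + w) = 0 := by linear_combination h
  have hsum : IsUnit ((u - w) + (u + w)) := by
    rw [show (u - w) + (u + w) = 2 * u by ring]
    exact h2.mul hu
  rcases isUnit_or_isUnit_of_isUnit_add hsum with hunit | hunit
  · right
    linear_combination hunit.mul_right_eq_zero.mp hprod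
  · left
    linear_combination -hunit.mul_left_eq_zero.mp hprod

namespace ZMod

section

variable {n : ℕ}

theorem exists_addEquiv_eq_toAddEquiv (φ : ZMod n ≃+ ZMod n) :
    ∃ u : (ZMod n)ˣ, φ = DistribMulAction.toAddEquiv (ZMod n) u :=
  ⟨(AddAutEquivUnits n φ).toMul, ((AddAutEquivUnits n).symm_apply_apply φ).symm⟩

theorem opIso_affOp_toAddEquiv_iff {u w u' w' : (ZMod n)ˣ} {c c' : ZMod n} :
    OpIso (affOp (DistribMulAction.toAddEquiv _ u) (DistribMulAction.toAddEquiv _ w) c)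
        (affOp (DistribMulAction.toAddEquiv _ u') (DistribMulAction.toAddEquiv _ w') c') ↔
      u = u' ∧ w = w' ∧ ∃ (g : (ZMod n)ˣ) (e : ZMod n), c' = g * c + (1 - u - w) * e := by
  rw [opIso_affOp_iff]
  constructor
  · rintro ⟨g, e, hu, hw, hc⟩
    obtain ⟨v, rfl⟩ := exists_addEquiv_eq_toAddEquiv g
    simp only [DistribMulAction.toAddEquiv_apply, Units.smul_def, smul_eq_mul] at hu hw hc
    have cancel : ∀ a a' : (ZMod n)ˣ, (∀ x, (v : ZMod n) * (a * x) = a' * (v * x)) → a = a' :=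
      fun a a' h => Units.ext <| v.isUnit.mul_left_cancel <| by linear_combination h 1
    obtain rfl := cancel u u' hu
    obtain rfl := cancel w w' hw
    exact ⟨rfl, rfl, v, e, by rw [hc]; ring⟩
  · rintro ⟨rfl, rfl, g, e, rfl⟩
    refine ⟨DistribMulAction.toAddEquiv _ g, e, fun x => ?_, fun x => ?_, ?_⟩ <;>
      simp only [DistribMulAction.toAddEquiv_apply, Units.smul_def, smul_eq_mul] <;> ring

theorem isAffineParamedialOp_iff {op : ZMod n → ZMod n → ZMod n} :
    IsAffineParamedialOp op ↔ ∃ (u w : (ZMod n)ˣ) (c : ZMod n), u ^ 2 = w ^ 2 ∧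
      op = affOp (DistribMulAction.toAddEquiv _ u) (DistribMulAction.toAddEquiv _ w) c := by
  have sq_eq_iff : ∀ u w : (ZMod n)ˣ, u ^ 2 = w ^ 2 ↔
      ∀ x : ZMod n, (u : ZMod n) * (u * x) = w * (w * x) := fun u w => by
    refine ⟨fun h x => ?_, fun h => Units.ext ?_⟩
    · simpa [sq, mul_assoc] using congrArg (fun a : (ZMod n)ˣ => (a : ZMod n) * x) h
    · simpa [sq] using h 1
  constructor
  · rintro ⟨φ, ψ, c, hsq, rfl⟩
    obtain ⟨u, rfl⟩ := exists_addEquiv_eq_toAddEquiv φ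
    obtain ⟨w, rfl⟩ := exists_addEquiv_eq_toAddEquiv ψ
    simp only [DistribMulAction.toAddEquiv_apply, Units.smul_def, smul_eq_mul] at hsq
    exact ⟨u, w, c, (sq_eq_iff u w).mpr hsq, rfl⟩
  · rintro ⟨u, w, c, hsq, rfl⟩
    refine ⟨_, _, c, fun x => ?_, rfl⟩
    simpa only [DistribMulAction.toAddEquiv_apply, Units.smul_def, smul_eq_mul] using
      (sq_eq_iff u w).mp hsq x

end

theorem natCast_pow_self_eq_zero {p k : ℕ} : (p : ZMod (p ^ k)) ^ k = 0 := by
  exact_mod_cast natCast_self (p ^ k)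

theorem isUnit_two {p k : ℕ} (hodd : Odd p) : IsUnit (2 : ZMod (p ^ k)) := by
  simpa using isUnit_prime_of_not_dvd Nat.prime_two (hodd.pow).not_two_dvd_nat

/-- The `p`-adic valuation on `ZMod (p ^ k)`, truncated at `k`; in particular `pVal p k 0 = k`. -/
def pVal (p k : ℕ) [Fact p.Prime] (x : ZMod (p ^ k)) : ℕ :=
  Nat.findGreatest (fun j => (p : ZMod (p ^ k)) ^ j ∣ x) k

variable {p k : ℕ} [Fact p.Prime]

theorem pVal_le (x : ZMod (p ^ k)) : pVal p k x ≤ k :=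
  Nat.findGreatest_le k

theorem pow_dvd_iff_le_pVal {j : ℕ} (hj : j ≤ k) {x : ZMod (p ^ k)} :
    (p : ZMod (p ^ k)) ^ j ∣ x ↔ j ≤ pVal p k x :=
  ⟨fun h => Nat.le_findGreatest hj h, fun h =>
    (pow_dvd_pow _ h).trans (Nat.findGreatest_spec (P := fun j => (p : ZMod (p ^ k)) ^ j ∣ x)
      (Nat.zero_le k) (by simp))⟩

theorem le_min_pVal_iff {j : ℕ} (hj : j ≤ k) {x y : ZMod (p ^ k)} :
    j ≤ min (pVal p k x) (pVal p k y) ↔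
      (p : ZMod (p ^ k)) ^ j ∣ x ∧ (p : ZMod (p ^ k)) ^ j ∣ y := by
  rw [le_min_iff, pow_dvd_iff_le_pVal hj, pow_dvd_iff_le_pVal hj]

theorem isUnit_iff_not_dvd (hk : k ≠ 0) {x : ZMod (p ^ k)} :
    IsUnit x ↔ ¬ (p : ZMod (p ^ k)) ∣ x := by
  constructor
  · rintro hx ⟨y, rfl⟩
    exact prime_natCast_not_isUnit_pow Fact.out (Nat.pos_of_ne_zero hk)
      (isUnit_of_mul_isUnit_left hx)
  · intro hx
    rw [← natCast_zmod_val x, isUnit_natCast_iff_not_dvd_pow Fact.out (Nat.pos_of_ne_zero hk)]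
    rintro ⟨m, hm⟩
    exact hx ⟨m, by rw [← natCast_zmod_val x, hm, Nat.cast_mul]⟩

theorem pVal_eq_zero_iff (hk : k ≠ 0) {x : ZMod (p ^ k)} : pVal p k x = 0 ↔ IsUnit x := by
  rw [isUnit_iff_not_dvd hk, ← pow_one (p : ZMod (p ^ k)),
    pow_dvd_iff_le_pVal (Nat.one_le_iff_ne_zero.mpr hk)]
  omega

theorem isLocalRing (hk : k ≠ 0) : IsLocalRing (ZMod (p ^ k)) := by
  have : Nontrivial (ZMod (p ^ k)) :=
    nontrivial_iff.mpr (Nat.one_lt_pow hk (Fact.out : p.Prime).one_lt).ne'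
  refine IsLocalRing.of_isUnit_or_isUnit_one_sub_self fun x => ?_
  simp only [isUnit_iff_not_dvd hk, ← not_and_or]
  rintro ⟨hx, hx'⟩
  exact (isUnit_iff_not_dvd hk).mp isUnit_one (by simpa using dvd_add hx hx')

theorem exists_eq_unit_mul_pow_pVal (x : ZMod (p ^ k)) :
    ∃ u : (ZMod (p ^ k))ˣ, x = u * (p : ZMod (p ^ k)) ^ pVal p k x := by
  obtain ⟨y, hy⟩ := (pow_dvd_iff_le_pVal (pVal_le x)).mpr le_rfl
  have hvk := pVal_le x
  generalize hv : pVal p k x = v at hy hvk ⊢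
  rcases hvk.lt_or_eq with hlt | rfl
  · have hunit : IsUnit y := (isUnit_iff_not_dvd (by omega)).mpr fun hpy => by
      have hdvd : (p : ZMod (p ^ k)) ^ (v + 1) ∣ x := by
        rw [hy, pow_succ]
        exact mul_dvd_mul_left _ hpy
      have := (pow_dvd_iff_le_pVal hlt).mp hdvd
      omega
    exact ⟨hunit.unit, by rw [hy, mul_comm]; rfl⟩
  · exact ⟨1, by rw [hy, natCast_pow_self_eq_zero, zero_mul, mul_zero]⟩

theorem pVal_pow {j : ℕ} (hj : j ≤ k) : pVal p k ((p : ZMod (p ^ k)) ^ j) = j := by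
  refine le_antisymm ?_ ((pow_dvd_iff_le_pVal hj).mp dvd_rfl)
  by_contra! hlt
  have hjk : j < k := hlt.trans_le (pVal_le _)
  obtain ⟨z, hz⟩ := (pow_dvd_iff_le_pVal hjk).mpr hlt
  rw [pow_succ] at hz
  have hunit : IsUnit (1 - (p : ZMod (p ^ k)) * z) :=
    ((Commute.all _ _).isNilpotent_mul_right ⟨k, natCast_pow_self_eq_zero⟩).isUnit_one_sub
  have hzero : (p : ZMod (p ^ k)) ^ j = 0 :=
    hunit.mul_right_eq_zero.mp (by linear_combination hz)
  have hk : ¬ k ≤ j := hjk.not_ge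
  rw [← (Nat.pow_dvd_pow_iff_le_right (Fact.out : p.Prime).one_lt), ← natCast_eq_zero_iff] at hk
  exact hk (by exact_mod_cast hzero)

theorem min_pVal_eq_min_pVal_iff {z c c' : ZMod (p ^ k)} :
    min (pVal p k c) (pVal p k z) = min (pVal p k c') (pVal p k z) ↔
      ∃ (g : (ZMod (p ^ k))ˣ) (e : ZMod (p ^ k)), c' = g * c + z * e := by
  constructor
  · intro h
    obtain ⟨w, hw⟩ := exists_eq_unit_mul_pow_pVal z
    rcases lt_or_ge (pVal p k c) (pVal p k z) with hlt | hge
    · have hc' : pVal p k c' = pVal p k c := by omega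
      obtain ⟨u, hu⟩ := exists_eq_unit_mul_pow_pVal c
      obtain ⟨u', hu'⟩ := exists_eq_unit_mul_pow_pVal c'
      refine ⟨u' * u⁻¹, 0, ?_⟩
      rw [hu', hc']
      conv_rhs => rw [hu]
      rw [mul_zero, add_zero, Units.val_mul, mul_assoc, Units.inv_mul_cancel_left]
    · have hle := (le_min_pVal_iff (x := c') (y := z) (pVal_le z)).mp (by omega)
      obtain ⟨t, ht⟩ := dvd_sub hle.1 ((pow_dvd_iff_le_pVal (pVal_le z)).mpr hge)
      refine ⟨1, ↑w⁻¹ * t, ?_⟩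
      rw [hw, Units.val_one]
      linear_combination ht - (p : ZMod (p ^ k)) ^ pVal p k z * t * w.mul_inv
  · rintro ⟨g, e, rfl⟩
    have key : ∀ j ≤ k, j ≤ min (pVal p k c) (pVal p k z) ↔
        j ≤ min (pVal p k (g * c + z * e)) (pVal p k z) := fun j hj => by
      rw [le_min_pVal_iff hj, le_min_pVal_iff hj]
      exact and_congr_left fun hz => by
        rw [dvd_add_left (dvd_mul_of_dvd_left hz e), Units.dvd_mul_left]
    exact le_antisymm ((key _ ((min_le_right _ _).trans (pVal_le z))).mp le_rfl)
      ((key _ ((min_le_right _ _).trans (pVal_le z))).mpr le_rfl)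

theorem card_pow_dvd {j : ℕ} (hj : j ≤ k) :
    #{x : ZMod (p ^ k) | (p : ZMod (p ^ k)) ^ j ∣ x} = p ^ (k - j) := by
  have hmem : ∀ x : ZMod (p ^ k), (p : ZMod (p ^ k)) ^ j ∣ x ↔
      x ∈ AddSubgroup.zmultiples ((p ^ j : ℕ) : ZMod (p ^ k)) := fun x => by
    rw [AddSubgroup.mem_zmultiples_iff, Nat.cast_pow]
    constructor
    · rintro ⟨y, rfl⟩
      exact ⟨y.cast, by rw [zsmul_eq_mul, intCast_zmod_cast, mul_comm]⟩
    · rintro ⟨m, rfl⟩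
      exact ⟨m, by rw [zsmul_eq_mul, mul_comm]⟩
  rw [← Fintype.card_subtype, Fintype.card_congr (Equiv.subtypeEquivRight hmem),
    ← Nat.card_eq_fintype_card, Nat.card_zmultiples, addOrderOf_coe _ (NeZero.ne _),
    Nat.gcd_eq_right (pow_dvd_pow p hj), Nat.pow_div hj (Fact.out : p.Prime).pos]

theorem sum_pVal : ∑ x : ZMod (p ^ k), pVal p k x = ∑ i ∈ range k, p ^ i := by
  have hcount : ∀ x : ZMod (p ^ k),
      pVal p k x = #{i ∈ range k | (p : ZMod (p ^ k)) ^ (i + 1) ∣ x} := fun x => by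
    have hv := pVal_le x
    rw [← card_range (pVal p k x)]
    congr 1
    ext i
    simp only [mem_range, mem_filter]
    constructor
    · intro hi
      exact ⟨by omega, (pow_dvd_iff_le_pVal (by omega)).mpr hi⟩
    · rintro ⟨hi, hdvd⟩
      exact (pow_dvd_iff_le_pVal hi).mp hdvd
  calc ∑ x : ZMod (p ^ k), pVal p k x
      = ∑ i ∈ range k, #{x : ZMod (p ^ k) | (p : ZMod (p ^ k)) ^ (i + 1) ∣ x} := by
        simp only [hcount]
        exact sum_card_bipartiteAbove_eq_sum_card_bipartiteBelow _
    _ = ∑ i ∈ range k, p ^ (k - 1 - i) :=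
        sum_congr rfl fun i hi => by
          rw [card_pow_dvd (mem_range.mp hi)]
          congr 1
          omega
    _ = ∑ i ∈ range k, p ^ i := sum_range_reflect (p ^ ·) k

/-- As `a` runs over the units, `1 - 2 a` runs over all `x` with `1 - x` a unit, which include
every `x` of positive valuation. -/
theorem sum_pVal_one_sub_two_mul (hodd : Odd p) (hk : k ≠ 0) :
    ∑ a : (ZMod (p ^ k))ˣ, pVal p k (1 - 2 * a) = ∑ x : ZMod (p ^ k), pVal p k x := by
  have := isLocalRing (p := p) hk
  have h2 := isUnit_two (k := k) hodd
  refine sum_of_injOn (fun a => 1 - 2 * (a : ZMod (p ^ k))) (fun a _ b _ hab => ?_)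
    (fun _ _ => mem_coe.mpr (mem_univ _)) (fun x _ hx => ?_) (fun _ _ => rfl)
  · exact Units.ext (h2.mul_left_cancel (by simpa using hab))
  · by_contra hpos
    have hunit := IsLocalRing.isUnit_one_sub_self_of_mem_nonunits x
      (mt (pVal_eq_zero_iff hk).mpr hpos)
    refine hx ⟨h2.unit⁻¹ * hunit.unit, mem_coe.mpr (mem_univ _), ?_⟩
    simp only [Units.val_mul, IsUnit.unit_spec, ← mul_assoc, IsUnit.mul_val_inv, one_mul]
    ring

end ZMod

/-- Representatives of the paramedial affine quasigroups over `ZMod (p ^ k)`: `inl a` stands for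
`x * y = a x - a y` and `inr ⟨a, j⟩` for `x * y = a x + a y + p ^ j`, `j ≤ pVal p k (1 - 2 a)`. -/
abbrev ParamedialIndex (p k : ℕ) [Fact p.Prime] : Type :=
  (ZMod (p ^ k))ˣ ⊕ Σ a : (ZMod (p ^ k))ˣ, Fin (ZMod.pVal p k (1 - 2 * a) + 1)

namespace ParamedialIndex

variable {p k : ℕ} [Fact p.Prime]

def rep : ParamedialIndex p k →
    {op : ZMod (p ^ k) → ZMod (p ^ k) → ZMod (p ^ k) // IsAffineParamedialOp op}
  | .inl a => ⟨affOp (DistribMulAction.toAddEquiv _ a) (DistribMulAction.toAddEquiv _ (-a)) 0,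
      ZMod.isAffineParamedialOp_iff.mpr ⟨a, -a, 0, (neg_sq a).symm, rfl⟩⟩
  | .inr ⟨a, j⟩ => ⟨affOp (DistribMulAction.toAddEquiv _ a) (DistribMulAction.toAddEquiv _ a)
        ((p : ZMod (p ^ k)) ^ (j : ℕ)),
      ZMod.isAffineParamedialOp_iff.mpr ⟨a, a, _, rfl, rfl⟩⟩

theorem eq_of_opIso_rep (hodd : Odd p) (hk : k ≠ 0) {i i' : ParamedialIndex p k}
    (h : OpIso (rep i).1 (rep i').1) : i = i' := by
  have := ZMod.isLocalRing (p := p) hk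
  have neg_ne_self : ∀ a : (ZMod (p ^ k))ˣ, -a ≠ a := fun a ha => by
    have h2a : 2 * (a : ZMod (p ^ k)) = 0 := by
      have ha' := congrArg Units.val ha
      rw [Units.val_neg] at ha'
      linear_combination -ha'
    exact not_isUnit_zero (h2a ▸ (ZMod.isUnit_two hodd).mul a.isUnit)
  rcases i with a | ⟨a, j⟩ <;> rcases i' with a' | ⟨a', j'⟩ <;>
    obtain ⟨rfl, hw, g, e, hc⟩ := ZMod.opIso_affOp_toAddEquiv_iff.mp h
  · rfl
  · exact absurd hw (neg_ne_self a)
  · exact absurd hw.symm (neg_ne_self a)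
  · have hz := (ZMod.pVal_le (1 - 2 * (a : ZMod (p ^ k))))
    have hmin := (ZMod.min_pVal_eq_min_pVal_iff (z := 1 - 2 * (a : ZMod (p ^ k)))
      (c := (p : ZMod (p ^ k)) ^ (j : ℕ)) (c' := (p : ZMod (p ^ k)) ^ (j' : ℕ))).mpr
        ⟨g, e, by rw [hc]; ring⟩
    rw [ZMod.pVal_pow (j.is_le.trans hz), ZMod.pVal_pow (j'.is_le.trans hz),
      min_eq_left j.is_le, min_eq_left j'.is_le] at hmin
    rw [Fin.ext hmin]

theorem exists_opIso_rep (hodd : Odd p) (hk : k ≠ 0)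
    (o : {op : ZMod (p ^ k) → ZMod (p ^ k) → ZMod (p ^ k) // IsAffineParamedialOp op}) :
    ∃ i : ParamedialIndex p k, OpIso (rep i).1 o.1 := by
  have := ZMod.isLocalRing (p := p) hk
  obtain ⟨u, w, c, hsq, hop⟩ := ZMod.isAffineParamedialOp_iff.mp o.2
  rw [hop]
  rcases IsLocalRing.eq_or_eq_neg_of_sq_eq_sq (ZMod.isUnit_two hodd) u.isUnit
    (by simpa using congrArg Units.val hsq) with hw | hw
  · obtain rfl : u = w := (Units.ext hw).symm
    set z := 1 - 2 * (u : ZMod (p ^ k))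
    set j := min (ZMod.pVal p k c) (ZMod.pVal p k z)
    have hj : j ≤ ZMod.pVal p k z := min_le_right _ _
    obtain ⟨g, e, hc⟩ := (ZMod.min_pVal_eq_min_pVal_iff (z := z)
      (c := (p : ZMod (p ^ k)) ^ j) (c' := c)).mp
        (by rw [ZMod.pVal_pow (hj.trans (ZMod.pVal_le z)), min_eq_left hj])
    exact ⟨.inr ⟨u, ⟨j, Nat.lt_succ_of_le hj⟩⟩,
      ZMod.opIso_affOp_toAddEquiv_iff.mpr ⟨rfl, rfl, g, e, by rw [hc]; ring⟩⟩
  · obtain rfl : w = -u := Units.ext (by rw [hw, Units.val_neg])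
    exact ⟨.inl u, ZMod.opIso_affOp_toAddEquiv_iff.mpr ⟨rfl, by simp, 1, c, by simp⟩⟩

end ParamedialIndex

theorem pqG_zmod_prime_pow {p k : ℕ} [Fact p.Prime] (hodd : Odd p) (hk : k ≠ 0) :
    pqG (ZMod (p ^ k)) = 2 * (p ^ k).totient + ∑ i ∈ range k, p ^ i := by
  let R := fun o₁ o₂ : {op : ZMod (p ^ k) → ZMod (p ^ k) → ZMod (p ^ k) //
    IsAffineParamedialOp op} => OpIso o₁.1 o₂.1
  have hR : Equivalence R := ⟨fun o => .refl o.1, .symm, .trans⟩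
  have hbij : Function.Bijective fun i : ParamedialIndex p k => Quot.mk R i.rep := by
    refine ⟨fun i i' h => ?_, Quot.ind fun o => ?_⟩
    · exact ParamedialIndex.eq_of_opIso_rep hodd hk ((hR.eqvGen_iff).mp (Quot.eq.mp h))
    · obtain ⟨i, hi⟩ := ParamedialIndex.exists_opIso_rep hodd hk o
      exact ⟨i, Quot.sound hi⟩
  rw [pqG, ← Nat.card_eq_of_bijective _ hbij, Nat.card_eq_fintype_card, Fintype.card_sum,
    Fintype.card_sigma]
  simp only [Fintype.card_fin, sum_add_distrib, ZMod.sum_pVal_one_sub_two_mul hodd hk,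
    ZMod.sum_pVal, sum_const, card_univ, smul_eq_mul, mul_one, ZMod.card_units_eq_totient]
  ring

theorem pq_cyclic_odd_prime_power (p k : ℕ) (hp : p.Prime) (hodd : Odd p) (hk : 1 ≤ k) :
    pqG (ZMod (p ^ k)) =
      2 * p ^ k - p ^ (k - 1) + ∑ i ∈ Finset.range (k - 1), p ^ i := by
  have := Fact.mk hp
  obtain ⟨m, rfl⟩ := Nat.exists_eq_add_of_le' hk
  rw [pqG_zmod_prime_pow hodd (by omega), Nat.totient_prime_pow hp (by omega), sum_range_succ,
    Nat.add_sub_cancel, pow_succ, Nat.mul_sub_one]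
  have : p ^ m ≤ p ^ m * p := Nat.le_mul_of_pos_right _ hp.pos
  omega
end

section
/- For every integer k ≥ 3, the number of isomorphism classes of paramedial quasigroups admitting an affine form over the cyclic group ℤ/2^k is 2^{k+1}. -/
/-!
An isomorphism `f` between affine quasigroups `φ x + ψ y + c` and `φ' x + ψ' y + c'` is itself
affine, `f = g + d` with `g` additive, and then `g ∘ φ = φ' ∘ g`, `g ∘ ψ = ψ' ∘ g`. When the
automorphisms of the group commute, the pair `(φ, ψ)` is therefore an isomorphism invariant.
Conversely, a translation `x ↦ x + t` matches the constants `c` and `c'` as soon as `φ t + ψ t - t`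
can take the value `c - c'`. Over `ZMod (2 ^ k)` the automorphisms are multiplications by the odd
residues, and `u + w - 1` is odd whenever `u` and `w` are, so the classes correspond to pairs of
units `(u, w)` with `u ^ 2 = w ^ 2`; there are
`totient (2 ^ k) · #{e | e ^ 2 = 1} = 2 ^ (k - 1) · 4` of them.
-/

section Affine

variable {G H : Type*} [AddCommGroup G] [AddCommGroup H]

theorem opIso_equivalence {A : Type*} : Equivalence (OpIso : (A → A → A) → (A → A → A) → Prop) where
  refl _ := ⟨Equiv.refl _, fun _ _ => rfl⟩
  symm := fun ⟨f, hf⟩ => ⟨f.symm, fun x y => f.injective (by simp [hf])⟩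
  trans := fun ⟨f, hf⟩ ⟨g, hg⟩ => ⟨f.trans g, fun x y => by simp [hf, hg]⟩

theorem exists_addEquiv_of_map_affOp {φ ψ : G ≃+ G} {φ' ψ' : H ≃+ H} {c : G} {c' : H}
    (f : G ≃ H) (hf : ∀ x y, f (affOp φ ψ c x y) = affOp φ' ψ' c' (f x) (f y)) :
    ∃ (g : G ≃+ H) (d : H), ∀ x, f x = g x + d := by
  simp only [affOp] at hf
  have hadd : ∀ a b, f (a + b + c) - f c = (f (a + c) - f c) + (f (b + c) - f c) := by
    intro a b
    have hab := hf (φ.symm a) (ψ.symm b)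
    have ha := hf (φ.symm a) 0
    have hb := hf 0 (ψ.symm b)
    have h0 := hf 0 0
    simp only [AddEquiv.apply_symm_apply, map_zero, add_zero, zero_add] at hab ha hb h0
    linear_combination (norm := abel) hab - ha - hb + h0
  let g : G ≃+ H := AddEquiv.mk' (((Equiv.addRight c).trans f).trans (Equiv.subRight (f c)))
    (fun a b => by simpa [add_right_comm a b c] using hadd a b)
  refine ⟨g, f c - g c, fun x => ?_⟩
  have : g (x - c) = f x - f c := show f (x - c + c) - f c = _ by rw [sub_add_cancel]
  linear_combination (norm := abel) -this + map_sub g x c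

theorem OpIso.exists_conj_affOp {φ ψ : G ≃+ G} {φ' ψ' : H ≃+ H} {c : G} {c' : H}
    (h : OpIso (affOp φ ψ c) (affOp φ' ψ' c')) :
    ∃ g : G ≃+ H, ∀ x, g (φ x) = φ' (g x) ∧ g (ψ x) = ψ' (g x) := by
  obtain ⟨f, hf⟩ := h
  obtain ⟨g, d, hg⟩ := exists_addEquiv_of_map_affOp f hf
  simp only [affOp, hg, map_add] at hf
  have h00 := hf 0 0
  refine ⟨g, fun x => ⟨?_, ?_⟩⟩
  · have hx0 := hf x 0
    simp only [map_zero, zero_add, add_zero] at hx0 h00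
    linear_combination (norm := abel) hx0 - h00
  · have h0x := hf 0 x
    simp only [map_zero, zero_add, add_zero] at h0x h00
    linear_combination (norm := abel) h0x - h00

theorem opIso_affOp_of_surjective {φ ψ : G ≃+ G} (h : Function.Surjective fun t => φ t + ψ t - t)
    (c c' : G) : OpIso (affOp φ ψ c) (affOp φ ψ c') := by
  obtain ⟨t, ht : φ t + ψ t - t = c - c'⟩ := h (c - c')
  refine ⟨Equiv.addRight t, fun x y => ?_⟩
  simp only [affOp, Equiv.coe_addRight, map_add]
  linear_combination (norm := abel) -ht

-- `AddAut G` is written additively, `+` being composition: `φ + φ = ψ + ψ` says `φ² = ψ²`.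
theorem pqG_eq_card_of_forall_add_comm
    (hcomm : ∀ φ ψ : AddAut G, φ + ψ = ψ + φ)
    (hsurj : ∀ φ ψ : AddAut G, φ + φ = ψ + ψ → Function.Surjective fun t => φ t + ψ t - t) :
    pqG G = Nat.card {p : AddAut G × AddAut G // p.1 + p.1 = p.2 + p.2} := by
  let toClass (p : {p : AddAut G × AddAut G // p.1 + p.1 = p.2 + p.2}) :
      Quot fun o₁ o₂ : {op : G → G → G // IsAffineParamedialOp op} => OpIso o₁.1 o₂.1 :=
    Quot.mk _ ⟨affOp p.1.1 p.1.2 0, p.1.1, p.1.2, 0, DFunLike.congr_fun p.2, rfl⟩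
  refine (Nat.card_eq_of_bijective toClass ⟨fun p q hpq => ?_, ?_⟩).symm
  · have hiso := ((opIso_equivalence.comap Subtype.val).eqvGen_iff).mp (Quot.eqvGen_exact hpq)
    obtain ⟨g, hg⟩ := OpIso.exists_conj_affOp hiso
    have h1 : g + p.1.1 = q.1.1 + g := AddEquiv.ext fun x => (hg x).1
    have h2 : g + p.1.2 = q.1.2 + g := AddEquiv.ext fun x => (hg x).2
    rw [hcomm] at h1 h2
    exact Subtype.ext (Prod.ext (add_right_cancel h1) (add_right_cancel h2))
  · rintro ⟨⟨op, φ, ψ, c, hsq, rfl⟩⟩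
    refine ⟨⟨(φ, ψ), AddEquiv.ext hsq⟩, Quot.sound ?_⟩
    exact opIso_affOp_of_surjective (hsurj φ ψ (AddEquiv.ext hsq)) 0 c

end Affine

def sqEqSqEquiv (M : Type*) [CommGroup M] :
    {p : M × M // p.1 ^ 2 = p.2 ^ 2} ≃ M × {e : M // e ^ 2 = 1} where
  toFun p := (p.1.1, ⟨p.1.2 / p.1.1, by rw [div_pow, p.2, div_self']⟩)
  invFun q := ⟨(q.1, q.1 * q.2.1), by rw [mul_pow, q.2.2, mul_one]⟩
  left_inv p := by ext <;> simp
  right_inv q := by ext <;> simp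

def unitsSqEqOneEquiv (M : Type*) [Monoid M] : {u : Mˣ // u ^ 2 = 1} ≃ {x : M // x ^ 2 = 1} where
  toFun u := ⟨u.1, by rw [← Units.val_pow_eq_pow_val, u.2, Units.val_one]⟩
  invFun x := ⟨⟨x.1, x.1, by rw [← sq, x.2], by rw [← sq, x.2]⟩, Units.ext (by simpa using x.2)⟩
  left_inv u := by ext; rfl
  right_inv x := rfl

namespace ZMod

variable {n : ℕ}

theorem addAut_apply_eq_mul (φ : AddAut (ZMod n)) (x : ZMod n) : φ x = φ 1 * x := by
  rw [mul_comm, ← x.intCast_zmod_cast, ← zsmul_eq_mul, ← map_zsmul, zsmul_one]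

theorem isUnit_addAut_apply_one (φ : AddAut (ZMod n)) : IsUnit (φ 1) :=
  IsUnit.of_mul_eq_one (φ.symm 1) (by rw [← addAut_apply_eq_mul, φ.apply_symm_apply])

theorem addAut_add_comm (φ ψ : AddAut (ZMod n)) : φ + ψ = ψ + φ :=
  (AddAutEquivUnits n).injective (by rw [map_add, map_add, add_comm])

def addAutSqEqSqEquiv (n : ℕ) :
    {p : AddAut (ZMod n) × AddAut (ZMod n) // p.1 + p.1 = p.2 + p.2} ≃
      {p : (ZMod n)ˣ × (ZMod n)ˣ // p.1 ^ 2 = p.2 ^ 2} :=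
  let e := (AddAutEquivUnits n).toEquiv.trans Additive.toMul
  e.prodCongr e |>.subtypeEquiv fun p => by
    simp only [e, Equiv.prodCongr_apply, Prod.map, Equiv.trans_apply, AddEquiv.toEquiv_eq_coe,
      AddEquiv.coe_toEquiv, sq, ← toMul_add, ← map_add]
    exact ((AddAutEquivUnits n).injective.eq_iff.symm.trans Additive.toMul.injective.eq_iff.symm)

theorem card_addAut_sqEqSq [NeZero n] :
    Nat.card {p : AddAut (ZMod n) × AddAut (ZMod n) // p.1 + p.1 = p.2 + p.2} =
      n.totient * Nat.card {x : ZMod n // x ^ 2 = 1} := by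
  rw [Nat.card_congr ((addAutSqEqSqEquiv n).trans (sqEqSqEquiv _)), Nat.card_prod,
    Nat.card_congr (unitsSqEqOneEquiv _), Nat.card_eq_fintype_card, card_units_eq_totient]

theorem pqG_eq_totient_mul [NeZero n]
    (h : ∀ u w : ZMod n, IsUnit u → IsUnit w → IsUnit (u + w - 1)) :
    pqG (ZMod n) = n.totient * Nat.card {x : ZMod n // x ^ 2 = 1} := by
  rw [pqG_eq_card_of_forall_add_comm addAut_add_comm, card_addAut_sqEqSq]
  intro φ ψ _ d
  obtain ⟨v, hv⟩ := h _ _ (isUnit_addAut_apply_one φ) (isUnit_addAut_apply_one ψ)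
  refine ⟨↑v⁻¹ * d, ?_⟩
  dsimp only
  rw [addAut_apply_eq_mul φ, addAut_apply_eq_mul ψ]
  linear_combination (-(↑v⁻¹ * d)) * hv + Units.mul_inv_cancel_left v d

end ZMod

theorem Int.two_pow_dvd_sub_one_or_add_one_of_dvd_sq_sub_one {a : ℤ} {k : ℕ}
    (h : 2 ^ (k + 2) ∣ a ^ 2 - 1) : 2 ^ (k + 1) ∣ a - 1 ∨ 2 ^ (k + 1) ∣ a + 1 := by
  obtain ⟨j, rfl | rfl⟩ := a.even_or_odd'
  · have h2 : (2 : ℤ) ∣ 2 * (2 * j ^ 2) - 1 := by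
      rw [show 2 * (2 * j ^ 2) - 1 = (2 * j) ^ 2 - 1 by ring]
      exact (dvd_pow_self 2 (by omega)).trans h
    omega
  have hj : 2 ^ k ∣ j * (j + 1) := by
    rw [show (2 * j + 1) ^ 2 - 1 = 2 ^ 2 * (j * (j + 1)) by ring, pow_add, mul_comm] at h
    exact (mul_dvd_mul_iff_left (by norm_num)).mp h
  -- one of `j` and `j + 1` is odd, so `2 ^ k` divides the other
  rcases j.even_or_odd with ⟨r, rfl⟩ | ⟨r, rfl⟩
  · left
    have := Int.prime_two.pow_dvd_of_dvd_mul_right k (by omega) hj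
    rw [pow_succ, show 2 * (r + r) + 1 - 1 = (r + r) * 2 by ring]
    exact mul_dvd_mul_right this 2
  · right
    have := Int.prime_two.pow_dvd_of_dvd_mul_left k (by omega) hj
    rw [pow_succ, show 2 * (2 * r + 1) + 1 + 1 = (2 * r + 1 + 1) * 2 by ring]
    exact mul_dvd_mul_right this 2

namespace ZMod

variable {k : ℕ}

theorem isUnit_intCast_two_pow_iff (hk : k ≠ 0) (a : ℤ) :
    IsUnit (a : ZMod (2 ^ k)) ↔ Odd a := by
  rw [coe_int_isUnit_iff_isCoprime, Nat.cast_pow, Nat.cast_ofNat,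
    IsCoprime.pow_left_iff (Nat.pos_of_ne_zero hk), Int.isCoprime_two_left]

theorem isUnit_add_sub_one_of_two_pow (hk : k ≠ 0) {u w : ZMod (2 ^ k)} (hu : IsUnit u)
    (hw : IsUnit w) : IsUnit (u + w - 1) := by
  obtain ⟨a, rfl⟩ := intCast_surjective u
  obtain ⟨b, rfl⟩ := intCast_surjective w
  rw [isUnit_intCast_two_pow_iff hk] at hu hw
  have := (isUnit_intCast_two_pow_iff hk (a + b - 1)).mpr ((hu.add_odd hw).sub_odd odd_one)
  simpa using this

theorem two_pow_mul_eq_zero_or_eq (q : ZMod (2 ^ (k + 1))) :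
    2 ^ k * q = 0 ∨ 2 ^ k * q = 2 ^ k := by
  have h : (2 : ZMod (2 ^ (k + 1))) ^ (k + 1) = 0 := by exact_mod_cast natCast_self (2 ^ (k + 1))
  obtain ⟨a, rfl⟩ := intCast_surjective q
  obtain ⟨r, rfl | rfl⟩ := a.even_or_odd'
  · left
    push_cast
    linear_combination (r : ZMod (2 ^ (k + 1))) * h
  · right
    push_cast
    linear_combination (r : ZMod (2 ^ (k + 1))) * h

theorem sq_eq_one_iff_of_two_pow (x : ZMod (2 ^ (k + 2))) :
    x ^ 2 = 1 ↔ x = 1 ∨ x = -1 ∨ x = 2 ^ (k + 1) + 1 ∨ x = 2 ^ (k + 1) - 1 := by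
  have h : (2 : ZMod (2 ^ (k + 2))) ^ (k + 2) = 0 := by exact_mod_cast natCast_self (2 ^ (k + 2))
  refine ⟨fun hx => ?_, ?_⟩
  · obtain ⟨a, rfl⟩ := intCast_surjective x
    have hdvd : 2 ^ (k + 2) ∣ a ^ 2 - 1 := by
      have := (intCast_zmod_eq_zero_iff_dvd (a ^ 2 - 1) (2 ^ (k + 2))).mp
        (by push_cast; rw [hx, sub_self])
      exact_mod_cast this
    rcases Int.two_pow_dvd_sub_one_or_add_one_of_dvd_sq_sub_one hdvd with ⟨q, hq⟩ | ⟨q, hq⟩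
    · rw [show a = 2 ^ (k + 1) * q + 1 by omega]
      push_cast
      rcases two_pow_mul_eq_zero_or_eq (k := k + 1) q with h0 | h0 <;> rw [h0] <;> simp
    · rw [show a = 2 ^ (k + 1) * q - 1 by omega]
      push_cast
      rcases two_pow_mul_eq_zero_or_eq (k := k + 1) q with h0 | h0 <;> rw [h0] <;> simp
  · rintro (rfl | rfl | rfl | rfl)
    · exact one_pow 2
    · exact neg_one_sq
    · linear_combination (2 ^ k + 1 : ZMod (2 ^ (k + 2))) * h
    · linear_combination (2 ^ k - 1 : ZMod (2 ^ (k + 2))) * h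

theorem card_sq_eq_one_of_two_pow (hk : 3 ≤ k) :
    Nat.card {x : ZMod (2 ^ k) // x ^ 2 = 1} = 4 := by
  classical
  obtain ⟨j, rfl⟩ : ∃ j, k = j + 1 + 2 := ⟨k - 3, by omega⟩
  have hP : (4 : ℤ) ≤ 2 ^ (j + 2) :=
    calc (4 : ℤ) = 2 ^ 2 := by norm_num
      _ ≤ 2 ^ (j + 2) := pow_le_pow_right₀ (by norm_num) (by omega)
  have hne : ∀ z : ℤ, 0 < z → z < 2 * 2 ^ (j + 2) → (z : ZMod (2 ^ (j + 1 + 2))) ≠ 0 := by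
    intro z hz hlt h
    have := Int.le_of_dvd hz ((intCast_zmod_eq_zero_iff_dvd z _).mp h)
    rw [Nat.cast_pow, Nat.cast_ofNat, show j + 1 + 2 = j + 2 + 1 by rfl, pow_succ] at this
    omega
  have hroots : Finset.univ.filter (fun x : ZMod (2 ^ (j + 1 + 2)) => x ^ 2 = 1) =
      {1, -1, 2 ^ (j + 2) + 1, 2 ^ (j + 2) - 1} := by
    ext x
    simp [sq_eq_one_iff_of_two_pow]
  rw [Nat.card_eq_fintype_card, Fintype.card_subtype, hroots, Finset.card_insert_of_notMem,
    Finset.card_insert_of_notMem, Finset.card_pair]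
  · exact fun h => hne 2 (by norm_num) (by omega) (by push_cast; linear_combination h)
  · simp only [Finset.mem_insert, Finset.mem_singleton, not_or]
    exact ⟨fun h => hne (2 ^ (j + 2) + 2) (by omega) (by omega)
        (by push_cast; linear_combination -h),
      fun h => hne (2 ^ (j + 2)) (by omega) (by omega) (by push_cast; linear_combination -h)⟩
  · simp only [Finset.mem_insert, Finset.mem_singleton, not_or]
    exact ⟨fun h => hne 2 (by norm_num) (by omega) (by push_cast; linear_combination h),
      fun h => hne (2 ^ (j + 2)) (by omega) (by omega) (by push_cast; linear_combination -h),
      fun h => hne (2 ^ (j + 2) - 2) (by omega) (by omega) (by push_cast; linear_combination -h)⟩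

end ZMod

theorem pq_cyclic_two_power (k : ℕ) (hk : 3 ≤ k) :
    pqG (ZMod (2 ^ k)) = 2 ^ (k + 1) := by
  rw [ZMod.pqG_eq_totient_mul fun _ _ => ZMod.isUnit_add_sub_one_of_two_pow (by omega),
    ZMod.card_sq_eq_one_of_two_pow hk, Nat.totient_prime_pow Nat.prime_two (by omega)]
  obtain ⟨j, rfl⟩ : ∃ j, k = j + 1 := ⟨k - 1, by omega⟩
  rw [Nat.add_one_sub_one]
  ring
end

section
/- If G and H are finite abelian groups of coprime orders, then pq(G × H) = pq(G) · pq(H), where pq(G) denotes the number of isomorphism classes of paramedial quasigroups admitting an affine form over G. -/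
/-! ### Auxiliary material -/

section Aux

variable {G H : Type*} [AddCommGroup G] [AddCommGroup H]

/-- Product of two binary operations. -/
def prodOp (o₁ : G → G → G) (o₂ : H → H → H) : G × H → G × H → G × H :=
  fun p q => (o₁ p.1 q.1, o₂ p.2 q.2)

/-- Restriction of an operation on `G × H` to the first coordinate. -/
def restrG (op : G × H → G × H → G × H) : G → G → G :=
  fun a b => (op (a, 0) (b, 0)).1

/-- Restriction of an operation on `G × H` to the second coordinate. -/
def restrH (op : G × H → G × H → G × H) : H → H → H :=
  fun a b => (op (0, a) (0, b)).2

variable [Finite G] [Finite H]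

lemma eq_zero_of_coprime (hco : Nat.Coprime (Nat.card G) (Nat.card H))
    {h : H} (hh : Nat.card G • h = 0) : h = 0 := by
  have h2 : Nat.card H • h = 0 := card_nsmul_eq_zero'
  have d1 : addOrderOf h ∣ Nat.card G := addOrderOf_dvd_of_nsmul_eq_zero hh
  have d2 : addOrderOf h ∣ Nat.card H := addOrderOf_dvd_of_nsmul_eq_zero h2
  have : addOrderOf h ∣ 1 := hco ▸ Nat.dvd_gcd d1 d2
  exact (AddMonoid.addOrderOf_eq_one_iff).mp (Nat.dvd_one.mp this)

/-- An additive equivalence of `G × H` with coprime orders splits. -/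
lemma addEquiv_split (hco : Nat.Coprime (Nat.card G) (Nat.card H))
    (e : (G × H) ≃+ (G × H)) :
    ∃ (e₁ : G ≃+ G) (e₂ : H ≃+ H), ∀ p : G × H, e p = (e₁ p.1, e₂ p.2) := by
  have key2 : ∀ (u : (G × H) ≃+ (G × H)) (g : G), (u (g, 0)).2 = 0 := by
    intro u g
    apply eq_zero_of_coprime hco
    have : Nat.card G • u (g, (0 : H)) = u (Nat.card G • (g, (0 : H))) := (map_nsmul u _ _).symm
    have hz : Nat.card G • (g, (0 : H)) = (0 : G × H) := by
      ext
      · exact card_nsmul_eq_zero'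
      · simp
    have : Nat.card G • u (g, (0 : H)) = 0 := by rw [this, hz, map_zero]
    calc Nat.card G • (u (g, (0:H))).2 = (Nat.card G • u (g, (0:H))).2 := rfl
      _ = 0 := by rw [this]; rfl
  have key1 : ∀ (u : (G × H) ≃+ (G × H)) (h : H), (u (0, h)).1 = 0 := by
    intro u h
    apply eq_zero_of_coprime hco.symm
    have : Nat.card H • u ((0 : G), h) = u (Nat.card H • ((0 : G), h)) := (map_nsmul u _ _).symm
    have hz : Nat.card H • ((0 : G), h) = (0 : G × H) := by
      ext
      · simp
      · exact card_nsmul_eq_zero'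
    have : Nat.card H • u ((0 : G), h) = 0 := by rw [this, hz, map_zero]
    calc Nat.card H • (u ((0:G), h)).1 = (Nat.card H • u ((0:G), h)).1 := rfl
      _ = 0 := by rw [this]; rfl
  -- the split of e
  have hsplit : ∀ (u : (G × H) ≃+ (G × H)) (p : G × H),
      u p = ((u (p.1, 0)).1, (u (0, p.2)).2) := by
    intro u p
    have : u p = u (p.1, 0) + u (0, p.2) := by
      rw [← map_add]; congr 1; ext <;> simp
    rw [this]
    ext
    · simp [key1 u p.2]
    · simp [key2 u p.1]
  refine ⟨AddEquiv.mk ⟨fun g => (e (g, 0)).1, fun g => (e.symm (g, 0)).1, ?_, ?_⟩ ?_,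
          AddEquiv.mk ⟨fun h => (e (0, h)).2, fun h => (e.symm (0, h)).2, ?_, ?_⟩ ?_, ?_⟩
  · intro g
    have h2 := key2 e g
    have : e.symm ((e (g,0)).1, (0:H)) = e.symm (e (g, 0)) := by
      congr 1; ext
      · rfl
      · exact h2.symm
    simp only [this, AddEquiv.symm_apply_apply]
  · intro g
    have h2 := key2 e.symm g
    have : e ((e.symm (g,0)).1, (0:H)) = e (e.symm (g, 0)) := by
      congr 1; ext
      · rfl
      · exact h2.symm
    simp only [this, AddEquiv.apply_symm_apply]
  · intro x y
    have : ((x + y : G), (0 : H)) = (x, (0:H)) + (y, 0) := by ext <;> simp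
    simp only [this, map_add]; rfl
  · intro h
    have h1 := key1 e h
    have : e.symm ((0:G), (e (0,h)).2) = e.symm (e (0, h)) := by
      congr 1; ext
      · exact h1.symm
      · rfl
    simp only [this, AddEquiv.symm_apply_apply]
  · intro h
    have h1 := key1 e.symm h
    have : e ((0:G), (e.symm (0,h)).2) = e (e.symm (0, h)) := by
      congr 1; ext
      · exact h1.symm
      · rfl
    simp only [this, AddEquiv.apply_symm_apply]
  · intro x y
    have : ((0:G), x + y) = ((0:G), x) + (0, y) := by ext <;> simp
    simp only [this, map_add]; rfl
  · intro p
    exact hsplit e p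

/-- An affine paramedial op over a coprime product is the product of its restrictions,
and the restrictions are affine paramedial. -/
lemma affine_split (hco : Nat.Coprime (Nat.card G) (Nat.card H))
    {op : G × H → G × H → G × H} (hop : IsAffineParamedialOp op) :
    IsAffineParamedialOp (restrG op) ∧ IsAffineParamedialOp (restrH op) ∧
      op = prodOp (restrG op) (restrH op) := by
  obtain ⟨φ, ψ, c, hsq, rfl⟩ := hop
  obtain ⟨φ₁, φ₂, hφ⟩ := addEquiv_split hco φ
  obtain ⟨ψ₁, ψ₂, hψ⟩ := addEquiv_split hco ψ
  have hG : restrG (affOp φ ψ c) = affOp φ₁ ψ₁ c.1 := by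
    funext a b
    simp only [restrG, affOp, hφ, hψ, Prod.fst_add]
  have hH : restrH (affOp φ ψ c) = affOp φ₂ ψ₂ c.2 := by
    funext a b
    simp only [restrH, affOp, hφ, hψ, Prod.snd_add]
  refine ⟨⟨φ₁, ψ₁, c.1, ?_, hG⟩, ⟨φ₂, ψ₂, c.2, ?_, hH⟩, ?_⟩
  · intro x
    have := hsq (x, 0)
    rw [hφ, hφ, hψ, hψ] at this
    exact congrArg Prod.fst this
  · intro x
    have := hsq (0, x)
    rw [hφ, hφ, hψ, hψ] at this
    exact congrArg Prod.snd this
  · funext p q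
    rw [hG, hH]
    simp only [affOp, prodOp, hφ, hψ]
    ext <;> simp

/-- Product of affine paramedial ops is affine paramedial. -/
lemma affine_prod {o₁ : G → G → G} {o₂ : H → H → H}
    (h₁ : IsAffineParamedialOp o₁) (h₂ : IsAffineParamedialOp o₂) :
    IsAffineParamedialOp (prodOp o₁ o₂) := by
  obtain ⟨φ₁, ψ₁, c₁, hsq₁, rfl⟩ := h₁
  obtain ⟨φ₂, ψ₂, c₂, hsq₂, rfl⟩ := h₂
  refine ⟨φ₁.prodCongr φ₂, ψ₁.prodCongr ψ₂, (c₁, c₂), ?_, ?_⟩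
  · intro x
    ext
    · exact hsq₁ x.1
    · exact hsq₂ x.2
  · funext p q
    ext <;> rfl

/-- Any quasigroup isomorphism between affine quasigroups is affine:
`x ↦ f x - f 0` is additive. -/
lemma opIso_additive {K K' : Type*} [AddCommGroup K] [AddCommGroup K']
    (φ ψ : K ≃+ K) (c : K) (φ' ψ' : K' ≃+ K') (c' : K')
    (f : K ≃ K') (hf : ∀ x y, f (affOp φ ψ c x y) = affOp φ' ψ' c' (f x) (f y)) :
    ∀ u v : K, f (u + v) = f u + f v - f 0 := by
  have key : ∀ u v : K, f (u + v) =
      φ' (f (φ.symm (u - c))) + (ψ' (f (ψ.symm v)) + c') := by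
    intro u v
    have h := hf (φ.symm (u - c)) (ψ.symm v)
    simp only [affOp, AddEquiv.apply_symm_apply] at h
    have harg : u - c + v + c = u + v := by abel
    rw [harg] at h
    rw [h]; abel
  intro u v
  have hu := key u 0
  have hv := key 0 v
  have h0 := key 0 0
  simp only [add_zero, zero_add] at hu hv h0
  rw [key u v, hu, hv, h0]
  abel

/-- Isomorphic affine paramedial ops over a coprime product have isomorphic restrictions. -/
lemma opIso_split (hco : Nat.Coprime (Nat.card G) (Nat.card H))
    {op op' : G × H → G × H → G × H}
    (hop : IsAffineParamedialOp op) (hop' : IsAffineParamedialOp op')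
    (hiso : OpIso op op') :
    OpIso (restrG op) (restrG op') ∧ OpIso (restrH op) (restrH op') := by
  obtain ⟨-, -, hprod⟩ := affine_split hco hop
  obtain ⟨-, -, hprod'⟩ := affine_split hco hop'
  obtain ⟨f, hf⟩ := hiso
  -- f is affine
  obtain ⟨φ, ψ, c, -, hopeq⟩ := hop
  obtain ⟨φ', ψ', c', -, hopeq'⟩ := hop'
  have hadd : ∀ u v : G × H, f (u + v) = f u + f v - f 0 :=
    opIso_additive φ ψ c φ' ψ' c' f (by rw [← hopeq, ← hopeq']; exact hf)
  -- build the additive equivalence g x = f x - f 0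
  let gE : (G × H) ≃+ (G × H) :=
    AddEquiv.mk' (f.trans (Equiv.subRight (f 0))) (by
      intro x y
      simp only [Equiv.trans_apply, Equiv.subRight_apply]
      rw [hadd x y]; abel)
  obtain ⟨g₁, g₂, hg⟩ := addEquiv_split hco gE
  have hfeq : ∀ p : G × H, f p = (g₁ p.1 + (f 0).1, g₂ p.2 + (f 0).2) := by
    intro p
    have : gE p = (g₁ p.1, g₂ p.2) := hg p
    have h2 : f p - f 0 = (g₁ p.1, g₂ p.2) := this
    have : f p = (g₁ p.1, g₂ p.2) + f 0 := by rw [← h2]; abel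
    rw [this]; rfl
  -- componentwise equivalences
  let f₁ : G ≃ G := g₁.toEquiv.trans (Equiv.addRight (f 0).1)
  let f₂ : H ≃ H := g₂.toEquiv.trans (Equiv.addRight (f 0).2)
  have hf₁ : ∀ g : G, f₁ g = g₁ g + (f 0).1 := fun _ => rfl
  have hf₂ : ∀ h : H, f₂ h = g₂ h + (f 0).2 := fun _ => rfl
  constructor
  · refine ⟨f₁, fun a b => ?_⟩
    have h := hf (a, 0) (b, 0)
    have lhs1 : (f (op (a, 0) (b, 0))).1 = f₁ (restrG op a b) := by
      rw [hfeq]; rw [hf₁]; rfl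
    have rhs1 : (op' (f (a, 0)) (f (b, 0))).1 = restrG op' (f₁ a) (f₁ b) := by
      conv_lhs => rw [hprod']
      have ha : (f (a, 0)).1 = f₁ a := by rw [hfeq]; rw [hf₁]
      have hb : (f (b, 0)).1 = f₁ b := by rw [hfeq]; rw [hf₁]
      simp only [prodOp]
      rw [ha, hb]
    rw [← lhs1, h, rhs1]
  · refine ⟨f₂, fun a b => ?_⟩
    have h := hf (0, a) (0, b)
    have lhs2 : (f (op (0, a) (0, b))).2 = f₂ (restrH op a b) := by
      rw [hfeq]; rw [hf₂]; rfl
    have rhs2 : (op' (f (0, a)) (f (0, b))).2 = restrH op' (f₂ a) (f₂ b) := by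
      conv_lhs => rw [hprod']
      have ha : (f (0, a)).2 = f₂ a := by rw [hfeq]; rw [hf₂]
      have hb : (f (0, b)).2 = f₂ b := by rw [hfeq]; rw [hf₂]
      simp only [prodOp]
      rw [ha, hb]
    rw [← lhs2, h, rhs2]

/-- Products of isomorphic ops are isomorphic. -/
lemma opIso_prod {o₁ o₁' : G → G → G} {o₂ o₂' : H → H → H}
    (h₁ : OpIso o₁ o₁') (h₂ : OpIso o₂ o₂') :
    OpIso (prodOp o₁ o₂) (prodOp o₁' o₂') := by
  obtain ⟨f₁, hf₁⟩ := h₁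
  obtain ⟨f₂, hf₂⟩ := h₂
  exact ⟨f₁.prodCongr f₂, fun p q => by
    simp only [prodOp, Equiv.prodCongr_apply, Prod.map]
    exact Prod.ext (hf₁ p.1 q.1) (hf₂ p.2 q.2)⟩

lemma opIso_refl {o : G → G → G} : OpIso o o :=
  ⟨Equiv.refl G, fun _ _ => rfl⟩

end Aux

theorem pqG_coprime_product (G H : Type*) [AddCommGroup G] [AddCommGroup H]
    [Finite G] [Finite H] (hco : Nat.Coprime (Nat.card G) (Nat.card H)) :
    pqG (G × H) = pqG G * pqG H := by
  classical
  let rK := fun o₁ o₂ : {op : G × H → G × H → G × H // IsAffineParamedialOp op} =>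
    OpIso o₁.1 o₂.1
  let rG := fun o₁ o₂ : {op : G → G → G // IsAffineParamedialOp op} => OpIso o₁.1 o₂.1
  let rH := fun o₁ o₂ : {op : H → H → H // IsAffineParamedialOp op} => OpIso o₁.1 o₂.1
  -- forward map
  let toF : Quot rK → Quot rG × Quot rH :=
    Quot.lift
      (fun o => (Quot.mk rG ⟨restrG o.1, (affine_split hco o.2).1⟩,
                 Quot.mk rH ⟨restrH o.1, (affine_split hco o.2).2.1⟩))
      (by
        intro a b hab
        obtain ⟨h1, h2⟩ := opIso_split hco a.2 b.2 hab
        exact Prod.ext (Quot.sound h1) (Quot.sound h2))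
  -- backward map
  let inv1 : Quot rG → Quot rH → Quot rK :=
    Quot.lift
      (fun a => Quot.lift (fun b => Quot.mk rK ⟨prodOp a.1 b.1, affine_prod a.2 b.2⟩)
        (fun b b' hbb => Quot.sound (opIso_prod opIso_refl hbb)))
      (by
        intro a a' haa
        funext qb
        induction qb using Quot.inductionOn with
        | h b => exact Quot.sound (opIso_prod haa opIso_refl))
  have hleft : ∀ q : Quot rK, inv1 (toF q).1 (toF q).2 = q := by
    intro q
    induction q using Quot.inductionOn with
    | h o =>
      have e1 : (⟨prodOp (restrG o.1) (restrH o.1),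
          affine_prod (affine_split hco o.2).1 (affine_split hco o.2).2.1⟩ :
          {op : G × H → G × H → G × H // IsAffineParamedialOp op}) = o :=
        Subtype.ext (affine_split hco o.2).2.2.symm
      have h1 : toF (Quot.mk rK o) = (Quot.mk rG ⟨restrG o.1, (affine_split hco o.2).1⟩,
          Quot.mk rH ⟨restrH o.1, (affine_split hco o.2).2.1⟩) := rfl
      calc inv1 (toF (Quot.mk rK o)).1 (toF (Quot.mk rK o)).2
          = inv1 (Quot.mk rG ⟨restrG o.1, (affine_split hco o.2).1⟩)
              (Quot.mk rH ⟨restrH o.1, (affine_split hco o.2).2.1⟩) := by rw [h1]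
        _ = Quot.mk rK ⟨prodOp (restrG o.1) (restrH o.1),
              affine_prod (affine_split hco o.2).1 (affine_split hco o.2).2.1⟩ := rfl
        _ = Quot.mk rK o := congrArg (Quot.mk rK) e1
  have hright : ∀ p : Quot rG × Quot rH, toF (inv1 p.1 p.2) = p := by
    rintro ⟨qa, qb⟩
    induction qa using Quot.inductionOn with
    | h a =>
      induction qb using Quot.inductionOn with
      | h b =>
        have hG : restrG (prodOp a.1 b.1) = a.1 := rfl
        have hH : restrH (prodOp a.1 b.1) = b.1 := rfl
        have e1 : (⟨restrG (prodOp a.1 b.1),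
            (affine_split hco (affine_prod a.2 b.2)).1⟩ :
            {op : G → G → G // IsAffineParamedialOp op}) = a := Subtype.ext hG
        have e2 : (⟨restrH (prodOp a.1 b.1),
            (affine_split hco (affine_prod a.2 b.2)).2.1⟩ :
            {op : H → H → H // IsAffineParamedialOp op}) = b := Subtype.ext hH
        have h2 : inv1 (Quot.mk rG a) (Quot.mk rH b)
            = Quot.mk rK ⟨prodOp a.1 b.1, affine_prod a.2 b.2⟩ := rfl
        show toF (inv1 (Quot.mk rG a) (Quot.mk rH b)) = (Quot.mk rG a, Quot.mk rH b)
        rw [h2]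
        calc toF (Quot.mk rK ⟨prodOp a.1 b.1, affine_prod a.2 b.2⟩)
            = (Quot.mk rG ⟨restrG (prodOp a.1 b.1),
                (affine_split hco (affine_prod a.2 b.2)).1⟩,
               Quot.mk rH ⟨restrH (prodOp a.1 b.1),
                (affine_split hco (affine_prod a.2 b.2)).2.1⟩) := rfl
          _ = (Quot.mk rG a, Quot.mk rH b) :=
              Prod.ext (congrArg (Quot.mk rG) e1) (congrArg (Quot.mk rH) e2)
  have hequiv : Quot rK ≃ Quot rG × Quot rH :=
    ⟨toF, fun p => inv1 p.1 p.2, hleft, hright⟩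
  show Nat.card (Quot rK) = Nat.card (Quot rG) * Nat.card (Quot rH)
  rw [Nat.card_congr hequiv, Nat.card_prod]
end

section
/- The function n ↦ pq(n) is multiplicative: for all coprime positive integers m and n, the number of isomorphism classes of paramedial quasigroups of order m·n equals the product of the number of isomorphism classes of paramedial quasigroups of order m and the number of isomorphism classes of paramedial quasigroups of order n. -/
/-- The paramedial law `(x*y)*(u*v) = (v*y)*(u*x)`. -/
def IsParamedial {Q : Type*} (op : Q → Q → Q) : Prop :=
  ∀ x y u v, op (op x y) (op u v) = op (op v y) (op u x)

namespace PQ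

variable {A B C D : Type*}

theorem opIso_refl (op : A → A → A) : OpIso op op := ⟨Equiv.refl A, fun _ _ => rfl⟩

theorem opIso_symm {op₁ : A → A → A} {op₂ : B → B → B} (h : OpIso op₁ op₂) : OpIso op₂ op₁ := by
  obtain ⟨f, hf⟩ := h
  refine ⟨f.symm, fun x y => ?_⟩
  apply f.injective
  simp [hf]

theorem opIso_trans {op₁ : A → A → A} {op₂ : B → B → B} {op₃ : C → C → C}
    (h : OpIso op₁ op₂) (h' : OpIso op₂ op₃) : OpIso op₁ op₃ := by
  obtain ⟨f, hf⟩ := h; obtain ⟨g, hg⟩ := h'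
  exact ⟨f.trans g, fun x y => by simp [hf, hg]⟩

theorem opIso_equivalence (n : ℕ) : Equivalence (fun o₁ o₂ :
    {op : Fin n → Fin n → Fin n // IsQuasigroupOp op ∧ IsParamedial op} => OpIso o₁.1 o₂.1) :=
  ⟨fun o => opIso_refl o.1, opIso_symm, opIso_trans⟩

/-- transport an operation along an equivalence -/
def tOp (f : A ≃ B) (op : A → A → A) : B → B → B := fun x y => f (op (f.symm x) (f.symm y))

theorem opIso_tOp (f : A ≃ B) (op : A → A → A) : OpIso op (tOp f op) :=
  ⟨f, fun x y => by simp [tOp]⟩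

theorem isQuasigroupOp_of_opIso {op₁ : A → A → A} {op₂ : B → B → B} (h : OpIso op₁ op₂)
    (hq : IsQuasigroupOp op₁) : IsQuasigroupOp op₂ := by
  obtain ⟨f, hf⟩ := h
  constructor
  · intro a
    have : (fun x => op₂ a x) = f ∘ (fun x => op₁ (f.symm a) x) ∘ f.symm := by
      funext x; simp [Function.comp, hf]
    rw [this]
    exact f.bijective.comp ((hq.1 _).comp f.symm.bijective)
  · intro a
    have : (fun x => op₂ x a) = f ∘ (fun x => op₁ x (f.symm a)) ∘ f.symm := by
      funext x; simp [Function.comp, hf]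
    rw [this]
    exact f.bijective.comp ((hq.2 _).comp f.symm.bijective)

theorem isParamedial_of_opIso {op₁ : A → A → A} {op₂ : B → B → B} (h : OpIso op₁ op₂)
    (hp : IsParamedial op₁) : IsParamedial op₂ := by
  obtain ⟨f, hf⟩ := h
  intro x y u v
  have := congrArg f (hp (f.symm x) (f.symm y) (f.symm u) (f.symm v))
  simpa [hf] using this

/-- product operation -/
def prodOp (op₁ : A → A → A) (op₂ : B → B → B) : A × B → A × B → A × B :=
  fun p q => (op₁ p.1 q.1, op₂ p.2 q.2)

theorem isQuasigroupOp_prodOp {op₁ : A → A → A} {op₂ : B → B → B}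
    (h₁ : IsQuasigroupOp op₁) (h₂ : IsQuasigroupOp op₂) : IsQuasigroupOp (prodOp op₁ op₂) := by
  constructor
  · intro a
    have : (fun x => prodOp op₁ op₂ a x) =
        (Equiv.prodCongr (Equiv.ofBijective _ (h₁.1 a.1)) (Equiv.ofBijective _ (h₂.1 a.2))) := by
      funext x; rfl
    rw [this]; exact (Equiv.prodCongr _ _).bijective
  · intro a
    have : (fun x => prodOp op₁ op₂ x a) =
        (Equiv.prodCongr (Equiv.ofBijective _ (h₁.2 a.1)) (Equiv.ofBijective _ (h₂.2 a.2))) := by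
      funext x; rfl
    rw [this]; exact (Equiv.prodCongr _ _).bijective

theorem isParamedial_prodOp {op₁ : A → A → A} {op₂ : B → B → B}
    (h₁ : IsParamedial op₁) (h₂ : IsParamedial op₂) : IsParamedial (prodOp op₁ op₂) := by
  intro x y u v
  simp only [prodOp, Prod.mk.injEq]
  exact ⟨h₁ _ _ _ _, h₂ _ _ _ _⟩

theorem opIso_prodOp_congr {op₁ : A → A → A} {op₂ : B → B → B} {op₃ : C → C → C}
    {op₄ : D → D → D} (h₁ : OpIso op₁ op₃) (h₂ : OpIso op₂ op₄) :
    OpIso (prodOp op₁ op₂) (prodOp op₃ op₄) := by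
  obtain ⟨f, hf⟩ := h₁; obtain ⟨g, hg⟩ := h₂
  exact ⟨Equiv.prodCongr f g, fun x y => by simp [prodOp, hf, hg]⟩


section Core

variable {Q : Type*} (op : Q → Q → Q) (hq : IsQuasigroupOp op) (e : Q)

/-- right translation by `e` as an equiv -/
noncomputable def aE : Q ≃ Q := Equiv.ofBijective _ (hq.2 e)
/-- left translation by `e` as an equiv -/
noncomputable def bE : Q ≃ Q := Equiv.ofBijective _ (hq.1 e)

@[simp] theorem aE_apply (x : Q) : aE op hq e x = op x e := rfl
@[simp] theorem bE_apply (x : Q) : bE op hq e x = op e x := rfl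

/-- the derived addition -/
noncomputable def dAdd (x y : Q) : Q := op ((aE op hq e).symm x) ((bE op hq e).symm y)
/-- the derived zero -/
def dZero : Q := op e e

theorem op_eq (x y : Q) : op x y = dAdd op hq e (op x e) (op e y) := by
  rw [dAdd, ← aE_apply op hq e x, ← bE_apply op hq e y, Equiv.symm_apply_apply,
    Equiv.symm_apply_apply]

@[simp] theorem dAdd_zero (x : Q) : dAdd op hq e x (dZero op e) = x := by
  have h : (bE op hq e).symm (dZero op e) = e := by
    rw [Equiv.symm_apply_eq]; rfl
  rw [dAdd, h, ← aE_apply op hq e, Equiv.apply_symm_apply]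

@[simp] theorem zero_dAdd (x : Q) : dAdd op hq e (dZero op e) x = x := by
  have h : (aE op hq e).symm (dZero op e) = e := by
    rw [Equiv.symm_apply_eq]; rfl
  rw [dAdd, h, ← bE_apply op hq e, Equiv.apply_symm_apply]

/-- left translation of `dAdd` as an equiv -/
noncomputable def dL (x : Q) : Q ≃ Q :=
  (bE op hq e).symm.trans (Equiv.ofBijective _ (hq.1 ((aE op hq e).symm x)))

@[simp] theorem dL_apply (x y : Q) : dL op hq e x y = dAdd op hq e x y := rfl

/-- right translation of `dAdd` as an equiv -/
noncomputable def dR (y : Q) : Q ≃ Q :=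
  (aE op hq e).symm.trans (Equiv.ofBijective _ (hq.2 ((bE op hq e).symm y)))

@[simp] theorem dR_apply (x y : Q) : dR op hq e y x = dAdd op hq e x y := rfl

/-- the conjugating equiv `Θ = α ∘ β⁻¹` -/
noncomputable def Th : Q ≃ Q := (bE op hq e).symm.trans (aE op hq e)

theorem aE_symm_Th (x : Q) : (aE op hq e).symm (Th op hq e x) = (bE op hq e).symm x := by
  rw [Equiv.symm_apply_eq]; rfl

theorem bE_symm_Th_symm (x : Q) : (bE op hq e).symm ((Th op hq e).symm x) =
    (aE op hq e).symm x := by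
  rw [Equiv.symm_apply_eq]; rfl


/-- `α(0)` -/
def za : Q := op (dZero op e) e
/-- `β(0)` -/
def b0 : Q := op e (dZero op e)

variable (hp : IsParamedial op)
include hp

theorem star2 (X Y U V : Q) :
    dAdd op hq e (op (dAdd op hq e X Y) e) (op e (dAdd op hq e U V)) =
    dAdd op hq e (op (dAdd op hq e (Th op hq e V) Y) e)
      (op e (dAdd op hq e U ((Th op hq e).symm X))) := by
  have h := hp ((aE op hq e).symm X) ((bE op hq e).symm Y)
    ((aE op hq e).symm U) ((bE op hq e).symm V)
  have e1 : op ((bE op hq e).symm V) ((bE op hq e).symm Y) =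
      dAdd op hq e (Th op hq e V) Y := by rw [dAdd, aE_symm_Th]
  have e2 : op ((aE op hq e).symm U) ((aE op hq e).symm X) =
      dAdd op hq e U ((Th op hq e).symm X) := by rw [dAdd, bE_symm_Th_symm]
  have h2 : op (dAdd op hq e X Y) (dAdd op hq e U V) =
      op (dAdd op hq e (Th op hq e V) Y) (dAdd op hq e U ((Th op hq e).symm X)) := by
    rw [← e1, ← e2]; exact h
  rw [op_eq op hq e (dAdd op hq e X Y), op_eq op hq e (dAdd op hq e (Th op hq e V) Y)] at h2
  exact h2

theorem lemma3 (X Y U : Q) :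
    dAdd op hq e (op (dAdd op hq e X Y) e)
      (op e (dAdd op hq e U ((Th op hq e).symm (dZero op e)))) =
    dAdd op hq e (op Y e) (op e (dAdd op hq e U ((Th op hq e).symm X))) := by
  have h := star2 op hq e hp X Y U ((Th op hq e).symm (dZero op e))
  rw [Equiv.apply_symm_apply, zero_dAdd] at h
  exact h

theorem lemma4 (X U : Q) :
    dAdd op hq e (op X e) (op e (dAdd op hq e U ((Th op hq e).symm (dZero op e)))) =
    dAdd op hq e (za op e) (op e (dAdd op hq e U ((Th op hq e).symm X))) := by
  have h := lemma3 op hq e hp X (dZero op e) U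
  rwa [dAdd_zero] at h

theorem lemma5 (X Y W : Q) :
    dAdd op hq e (op (dAdd op hq e X Y) e) W =
    dAdd op hq e (op Y e)
      ((dL op hq e (za op e)).symm (dAdd op hq e (op X e) W)) := by
  set dd := (Th op hq e).symm (dZero op e) with hdd
  set U := (dR op hq e dd).symm ((bE op hq e).symm W) with hU
  have hW : op e (dAdd op hq e U dd) = W := by
    have h1 : dAdd op hq e U dd = (bE op hq e).symm W := by
      rw [← dR_apply op hq e, hU, Equiv.apply_symm_apply]
    rw [h1, ← bE_apply op hq e, Equiv.apply_symm_apply]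
  have h3 := lemma3 op hq e hp X Y U
  have h4 := lemma4 op hq e hp X U
  rw [hW] at h3 h4
  have h5 : (dL op hq e (za op e)).symm (dAdd op hq e (op X e) W) =
      op e (dAdd op hq e U ((Th op hq e).symm X)) := by
    rw [Equiv.symm_apply_eq, dL_apply]; exact h4
  rw [h3, h5]

omit hp in
/-- `A = (L za)⁻¹ ∘ α` as an equiv -/
noncomputable def dA : Q ≃ Q := (aE op hq e).trans (dL op hq e (za op e)).symm

omit hp in
theorem za_dAdd_dA (x : Q) : dAdd op hq e (za op e) (dA op hq e x) = op x e := by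
  rw [← dL_apply]; exact Equiv.apply_symm_apply _ _

theorem lemma6 (X Y : Q) :
    op (dAdd op hq e X Y) e = dAdd op hq e (op Y e) (dA op hq e X) := by
  have h := lemma5 op hq e hp X Y (dZero op e)
  rwa [dAdd_zero, dAdd_zero] at h

theorem lemma7 (P Z W : Q) :
    dAdd op hq e (dAdd op hq e P Z) W =
    dAdd op hq e P
      ((dL op hq e (za op e)).symm (dAdd op hq e (dAdd op hq e (za op e) Z) W)) := by
  have h := lemma5 op hq e hp ((dA op hq e).symm Z) ((aE op hq e).symm P) W
  rw [lemma6 op hq e hp] at h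
  rw [show op ((aE op hq e).symm P) e = P from Equiv.apply_symm_apply (aE op hq e) P] at h
  rw [Equiv.apply_symm_apply] at h
  rw [show op ((dA op hq e).symm Z) e =
      dAdd op hq e (za op e) Z from by
    rw [← za_dAdd_dA op hq e ((dA op hq e).symm Z), Equiv.apply_symm_apply]] at h
  exact h

theorem lemma8 (Z W : Q) :
    dAdd op hq e (dAdd op hq e (za op e) Z) W =
    dAdd op hq e (za op e) (dAdd op hq e Z W) := by
  have h := lemma7 op hq e hp (dZero op e) Z W
  rw [zero_dAdd, zero_dAdd] at h
  have h2 := congrArg (dL op hq e (za op e)) h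
  rw [Equiv.apply_symm_apply, dL_apply] at h2
  exact h2.symm

theorem dAdd_assoc (P Z W : Q) :
    dAdd op hq e (dAdd op hq e P Z) W = dAdd op hq e P (dAdd op hq e Z W) := by
  rw [lemma7 op hq e hp, lemma8 op hq e hp, ← dL_apply op hq e (za op e),
    Equiv.symm_apply_apply]

omit hp in
/-- derived negation -/
noncomputable def dNeg (x : Q) : Q := (dL op hq e x).symm (dZero op e)

omit hp in
theorem dAdd_neg (x : Q) : dAdd op hq e x (dNeg op hq e x) = dZero op e := by
  rw [← dL_apply]; exact Equiv.apply_symm_apply _ _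

theorem neg_dAdd (x : Q) : dAdd op hq e (dNeg op hq e x) x = dZero op e := by
  have h : dAdd op hq e x (dAdd op hq e (dNeg op hq e x) x) =
      dAdd op hq e x (dZero op e) := by
    rw [← dAdd_assoc op hq e hp, dAdd_neg, zero_dAdd, dAdd_zero]
  exact (dL op hq e x).injective h

/-- the derived group structure -/
noncomputable def dAddGroup : AddGroup Q :=
  letI : Add Q := ⟨dAdd op hq e⟩
  letI : Zero Q := ⟨dZero op e⟩
  letI : Neg Q := ⟨dNeg op hq e⟩
  AddGroup.ofLeftAxioms (dAdd_assoc op hq e hp) (zero_dAdd op hq e) (neg_dAdd op hq e hp)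

/-- `B` as an equiv -/
noncomputable def dB : Q ≃ Q := (bE op hq e).trans (dR op hq e (b0 op e)).symm

omit hp in
theorem dB_dAdd_b0 (x : Q) : dAdd op hq e (dB op hq e x) (b0 op e) = op e x := by
  rw [← dR_apply]; exact Equiv.apply_symm_apply _ _

theorem dAdd_comm (x y : Q) : dAdd op hq e x y = dAdd op hq e y x := by
  letI : AddGroup Q := dAddGroup op hq e hp
  have S : ∀ X Y U V : Q, op (X + Y) e + op e (U + V) =
      op ((Th op hq e) V + Y) e + op e (U + (Th op hq e).symm X) :=
    fun X Y U V => star2 op hq e hp X Y U V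
  have hA : ∀ X : Q, op X e = za op e + dA op hq e X :=
    fun X => (za_dAdd_dA op hq e X).symm
  have hB' : ∀ V : Q, op e V = dB op hq e V + b0 op e :=
    fun V => (dB_dAdd_b0 op hq e V).symm
  have hA0 : dA op hq e (0 : Q) = 0 := by
    have h1 : za op e + dA op hq e (0:Q) = za op e + 0 := by
      rw [add_zero]; exact za_dAdd_dA op hq e (0:Q)
    exact add_left_cancel h1
  have hB0 : dB op hq e (0 : Q) = 0 := by
    have h1 : dB op hq e (0:Q) + b0 op e = 0 + b0 op e := by
      rw [zero_add]; exact dB_dAdd_b0 op hq e (0:Q)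
    exact add_right_cancel h1
  have L9 : ∀ X V : Q, dA op hq e X + dB op hq e V =
      dA op hq e (Th op hq e V) + dB op hq e ((Th op hq e).symm X) := by
    intro X V
    have h := S X 0 0 V
    simp only [add_zero, zero_add] at h
    rw [hA X, hA (Th op hq e V), hB' V, hB' ((Th op hq e).symm X)] at h
    simp only [add_assoc] at h
    have h3 := add_left_cancel h
    simp only [← add_assoc] at h3
    exact add_right_cancel h3
  have L15 : ∀ X : Q, dB op hq e ((Th op hq e).symm X) =
      -(dA op hq e (Th op hq e (0:Q))) + dA op hq e X := by
    intro X
    have h := L9 X 0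
    rw [hB0, add_zero] at h
    rw [h, neg_add_cancel_left]
  have L16 : ∀ V : Q, dA op hq e (Th op hq e V) =
      dB op hq e V - dB op hq e ((Th op hq e).symm (0:Q)) := by
    intro V
    have h := L9 0 V
    rw [hA0, zero_add] at h
    rw [h, add_sub_cancel_right]
  have key : ∀ p q : Q, p + q = (q - dB op hq e ((Th op hq e).symm (0:Q))) +
      (-(dA op hq e (Th op hq e (0:Q))) + p) := by
    intro p q
    have h := L9 ((dA op hq e).symm p) ((dB op hq e).symm q)
    rw [L15, L16, Equiv.apply_symm_apply, Equiv.apply_symm_apply] at h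
    exact h
  have key2 : dA op hq e (Th op hq e (0:Q)) + dB op hq e ((Th op hq e).symm (0:Q)) = 0 := by
    have h := key (dA op hq e (Th op hq e (0:Q))) (dB op hq e ((Th op hq e).symm (0:Q)))
    rwa [sub_self, neg_add_cancel, zero_add] at h
  have hs0 : dB op hq e ((Th op hq e).symm (0:Q)) = -(dA op hq e (Th op hq e (0:Q))) :=
    (neg_eq_of_add_eq_zero_right key2).symm
  have final : ∀ p q : Q, p + q = q + p := by
    intro p q
    rw [key p q, hs0, sub_neg_eq_add, add_assoc, add_neg_cancel_left]
  exact final x y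

/-- the derived commutative group structure -/
noncomputable def dACG : AddCommGroup Q :=
  { dAddGroup op hq e hp with add_comm := dAdd_comm op hq e hp }

/-- the constant of the affine representation -/
noncomputable def dC : Q := dAdd op hq e (za op e) (b0 op e)

theorem dA_add (x y : Q) : dA op hq e (dAdd op hq e x y) =
    dAdd op hq e (dA op hq e x) (dA op hq e y) := by
  letI : AddCommGroup Q := dACG op hq e hp
  have br : ∀ a b : Q, dAdd op hq e a b = a + b := fun _ _ => rfl
  simp only [br]
  have h1 : za op e + dA op hq e (x + y) = za op e + (dA op hq e x + dA op hq e y) := by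
    have c1 : za op e + dA op hq e (x + y) = op (x + y) e := za_dAdd_dA op hq e (x + y)
    have c2 : op (x + y) e = op y e + dA op hq e x := lemma6 op hq e hp x y
    have c3 : op y e = za op e + dA op hq e y := (za_dAdd_dA op hq e y).symm
    rw [c1, c2, c3, add_assoc, add_comm (dA op hq e y) (dA op hq e x)]
  exact add_left_cancel h1

theorem dB_add (x y : Q) : dB op hq e (dAdd op hq e x y) =
    dAdd op hq e (dB op hq e x) (dB op hq e y) := by
  letI : AddCommGroup Q := dACG op hq e hp
  have br : ∀ a b : Q, dAdd op hq e a b = a + b := fun _ _ => rfl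
  simp only [br]
  have hb0 : op e (0:Q) = b0 op e := rfl
  have S := star2 op hq e hp
  have L11 : ∀ U V : Q, op (Th op hq e (0:Q)) e + op e (U + V) =
      op (Th op hq e V) e + op e U := by
    intro U V
    have h : op (Th op hq e (0:Q) + (0:Q)) e + op e (U + V) =
        op ((Th op hq e) V + (0:Q)) e + op e (U + (Th op hq e).symm (Th op hq e (0:Q))) :=
      S (Th op hq e (0:Q)) (0:Q) U V
    rwa [add_zero, add_zero, Equiv.symm_apply_apply, add_zero] at h
  have L12 : ∀ V : Q, op (Th op hq e (0:Q)) e + op e V =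
      op (Th op hq e V) e + b0 op e := by
    intro V
    have h := L11 0 V
    rwa [zero_add, hb0] at h
  have L14 : ∀ U V : Q, op e (U + V) = (op e V - b0 op e) + op e U := by
    intro U V
    have h := L11 U V
    have h12 : op (Th op hq e V) e = (op (Th op hq e (0:Q)) e + op e V) - b0 op e :=
      eq_sub_of_add_eq (L12 V).symm
    rw [h12, add_sub_assoc, add_assoc] at h
    exact add_left_cancel h
  have hdB : ∀ z : Q, dB op hq e z = op e z - b0 op e :=
    fun z => eq_sub_of_add_eq (dB_dAdd_b0 op hq e z)
  rw [hdB, hdB, hdB, L14 x y]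
  abel

omit hp in
theorem dA_zero : dA op hq e (dZero op e) = dZero op e := by
  rw [dA, Equiv.trans_apply, Equiv.symm_apply_eq, dL_apply, aE_apply, za, dAdd_zero]

omit hp in
theorem dB_zero : dB op hq e (dZero op e) = dZero op e := by
  rw [dB, Equiv.trans_apply, Equiv.symm_apply_eq, dR_apply, bE_apply, b0, zero_dAdd]

theorem op_affine (x y : Q) : op x y =
    dAdd op hq e (dAdd op hq e (dA op hq e x) (dB op hq e y)) (dC op hq e) := by
  letI : AddCommGroup Q := dACG op hq e hp
  have br : ∀ a b : Q, dAdd op hq e a b = a + b := fun _ _ => rfl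
  rw [op_eq op hq e x y]
  simp only [br, dC]
  rw [show op x e = za op e + dA op hq e x from (za_dAdd_dA op hq e x).symm,
    show op e y = dB op hq e y + b0 op e from (dB_dAdd_b0 op hq e y).symm]
  abel

/-- raw natural smul -/
noncomputable def dNsmul : ℕ → Q → Q
  | 0, _ => dZero op e
  | (k+1), x => dAdd op hq e x (dNsmul k x)

omit hp in
theorem dNsmul_zero (x : Q) : dNsmul op hq e 0 x = dZero op e := rfl

omit hp in
theorem dNsmul_succ (k : ℕ) (x : Q) :
    dNsmul op hq e (k+1) x = dAdd op hq e x (dNsmul op hq e k x) := rfl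

omit hp in
theorem dNsmul_one (x : Q) : dNsmul op hq e 1 x = x := dAdd_zero op hq e x

omit hp in
theorem dNsmul_dZero (k : ℕ) : dNsmul op hq e k (dZero op e) = dZero op e := by
  induction k with
  | zero => rfl
  | succ k ih => rw [dNsmul_succ, ih, dAdd_zero]

theorem dNsmul_add_index (j k : ℕ) (x : Q) :
    dNsmul op hq e (j + k) x = dAdd op hq e (dNsmul op hq e j x) (dNsmul op hq e k x) := by
  induction j with
  | zero => rw [Nat.zero_add, dNsmul_zero, zero_dAdd]
  | succ j ih =>
    have : j + 1 + k = (j + k) + 1 := by omega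
    rw [this, dNsmul_succ, ih, dNsmul_succ, ← dAdd_assoc op hq e hp]

theorem dNsmul_mul (a b : ℕ) (x : Q) :
    dNsmul op hq e (a * b) x = dNsmul op hq e a (dNsmul op hq e b x) := by
  induction a with
  | zero => rw [Nat.zero_mul, dNsmul_zero, dNsmul_zero]
  | succ a ih =>
    have : (a + 1) * b = a * b + b := by ring
    rw [this, dNsmul_add_index op hq e hp, ih, dNsmul_succ, dAdd_comm op hq e hp]

theorem dNsmul_dAdd (k : ℕ) (x y : Q) :
    dNsmul op hq e k (dAdd op hq e x y) =
    dAdd op hq e (dNsmul op hq e k x) (dNsmul op hq e k y) := by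
  letI : AddCommGroup Q := dACG op hq e hp
  have br : ∀ a b : Q, dAdd op hq e a b = a + b := fun _ _ => rfl
  induction k with
  | zero => rw [dNsmul_zero, dNsmul_zero, dNsmul_zero, zero_dAdd]
  | succ k ih =>
    rw [dNsmul_succ, dNsmul_succ, dNsmul_succ, ih]
    simp only [br]
    abel

theorem dNsmul_dA (k : ℕ) (x : Q) :
    dA op hq e (dNsmul op hq e k x) = dNsmul op hq e k (dA op hq e x) := by
  induction k with
  | zero => rw [dNsmul_zero, dNsmul_zero, dA_zero]
  | succ k ih => rw [dNsmul_succ, dNsmul_succ, dA_add op hq e hp, ih]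

theorem dNsmul_dB (k : ℕ) (x : Q) :
    dB op hq e (dNsmul op hq e k x) = dNsmul op hq e k (dB op hq e x) := by
  induction k with
  | zero => rw [dNsmul_zero, dNsmul_zero, dB_zero]
  | succ k ih => rw [dNsmul_succ, dNsmul_succ, dB_add op hq e hp, ih]

theorem dNsmul_card [Finite Q] {N : ℕ} (hN : Nat.card Q = N) (x : Q) :
    dNsmul op hq e N x = dZero op e := by
  letI : AddCommGroup Q := dACG op hq e hp
  have brn : ∀ (k : ℕ) (y : Q), dNsmul op hq e k y = k • y := by
    intro k y
    induction k with
    | zero => exact (zero_nsmul y).symm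
    | succ k ih =>
      rw [dNsmul_succ, ih, succ_nsmul, add_comm]
      rfl
  rw [brn]
  rw [← hN]
  exact card_nsmul_eq_zero'

theorem dNsmul_mod {N : ℕ} {x : Q} (hNx : dNsmul op hq e N x = dZero op e) (k : ℕ) :
    dNsmul op hq e k x = dNsmul op hq e (k % N) x := by
  conv_lhs => rw [← Nat.mod_add_div k N]
  rw [dNsmul_add_index op hq e hp, mul_comm, dNsmul_mul op hq e hp, hNx, dNsmul_dZero, dAdd_zero]

/-- the `k`-torsion subset -/
def Tset (k : ℕ) : Set Q := {x | dNsmul op hq e k x = dZero op e}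

omit hp in
theorem mem_Tset {k : ℕ} {x : Q} : x ∈ Tset op hq e k ↔ dNsmul op hq e k x = dZero op e :=
  Iff.rfl

omit hp in
theorem zero_mem_Tset {k : ℕ} : dZero op e ∈ Tset op hq e k := dNsmul_dZero op hq e k

theorem mem_Tset_dAdd {k : ℕ} {x y : Q} (hx : x ∈ Tset op hq e k) (hy : y ∈ Tset op hq e k) :
    dAdd op hq e x y ∈ Tset op hq e k := by
  have := dNsmul_dAdd op hq e hp k x y
  rw [mem_Tset] at *
  rw [this, hx, hy, dAdd_zero]

theorem mem_Tset_dA {k : ℕ} {x : Q} (hx : x ∈ Tset op hq e k) :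
    dA op hq e x ∈ Tset op hq e k := by
  rw [mem_Tset] at *
  rw [← dNsmul_dA op hq e hp, hx, dA_zero]

theorem mem_Tset_dB {k : ℕ} {x : Q} (hx : x ∈ Tset op hq e k) :
    dB op hq e x ∈ Tset op hq e k := by
  rw [mem_Tset] at *
  rw [← dNsmul_dB op hq e hp, hx, dB_zero]

theorem mem_Tset_dA_symm {k : ℕ} {x : Q} (hx : x ∈ Tset op hq e k) :
    (dA op hq e).symm x ∈ Tset op hq e k := by
  rw [mem_Tset] at *
  apply (dA op hq e).injective
  rw [dNsmul_dA op hq e hp, Equiv.apply_symm_apply, hx, dA_zero]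

theorem mem_Tset_dB_symm {k : ℕ} {x : Q} (hx : x ∈ Tset op hq e k) :
    (dB op hq e).symm x ∈ Tset op hq e k := by
  rw [mem_Tset] at *
  apply (dB op hq e).injective
  rw [dNsmul_dB op hq e hp, Equiv.apply_symm_apply, hx, dB_zero]

theorem mem_Tset_dL_symm {k : ℕ} {a w : Q} (ha : a ∈ Tset op hq e k)
    (hw : w ∈ Tset op hq e k) : (dL op hq e a).symm w ∈ Tset op hq e k := by
  rw [mem_Tset] at *
  have h : dAdd op hq e a ((dL op hq e a).symm w) = w := by
    rw [← dL_apply]; exact Equiv.apply_symm_apply _ _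
  have h2 := dNsmul_dAdd op hq e hp k a ((dL op hq e a).symm w)
  rw [h, ha, zero_dAdd] at h2
  rw [← h2, hw]

theorem mem_Tset_dR_symm {k : ℕ} {b w : Q} (hb : b ∈ Tset op hq e k)
    (hw : w ∈ Tset op hq e k) : (dR op hq e b).symm w ∈ Tset op hq e k := by
  rw [mem_Tset] at *
  have h : dAdd op hq e ((dR op hq e b).symm w) b = w := by
    rw [← dR_apply]; exact Equiv.apply_symm_apply _ _
  have h2 := dNsmul_dAdd op hq e hp k ((dR op hq e b).symm w) b
  rw [h, hb, dAdd_zero] at h2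
  rw [← h2, hw]

/-- the factor operation on the `k`-torsion subset -/
noncomputable def pOp (k r : ℕ)
    (hc : dNsmul op hq e r (dC op hq e) ∈ Tset op hq e k) :
    Tset op hq e k → Tset op hq e k → Tset op hq e k :=
  fun x y => ⟨dAdd op hq e (dAdd op hq e (dA op hq e x.1) (dB op hq e y.1))
      (dNsmul op hq e r (dC op hq e)),
    mem_Tset_dAdd op hq e hp (mem_Tset_dAdd op hq e hp (mem_Tset_dA op hq e hp x.2)
      (mem_Tset_dB op hq e hp y.2)) hc⟩

theorem pOp_val {k r : ℕ} (hc : dNsmul op hq e r (dC op hq e) ∈ Tset op hq e k)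
    (x y : Tset op hq e k) : (pOp op hq e hp k r hc x y).1 =
    dAdd op hq e (dAdd op hq e (dA op hq e x.1) (dB op hq e y.1))
      (dNsmul op hq e r (dC op hq e)) := rfl

theorem key_AB (x y : Q) :
    dAdd op hq e (dA op hq e (dA op hq e x)) (dB op hq e (dB op hq e y)) =
    dAdd op hq e (dA op hq e (dA op hq e y)) (dB op hq e (dB op hq e x)) := by
  letI : AddCommGroup Q := dACG op hq e hp
  have br : ∀ a b : Q, dAdd op hq e a b = a + b := fun _ _ => rfl
  have E : ∀ p q u v : Q, op (op p q) (op u v) =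
      (dA op hq e (dA op hq e p) + dB op hq e (dB op hq e v)) +
      ((dA op hq e (dB op hq e q) + dB op hq e (dA op hq e u)) +
        (dA op hq e (dC op hq e) + (dB op hq e (dC op hq e) + dC op hq e))) := by
    intro p q u v
    have hA2 : ∀ a b : Q, dA op hq e (a + b) = dA op hq e a + dA op hq e b :=
      fun a b => dA_add op hq e hp a b
    have hB2 : ∀ a b : Q, dB op hq e (a + b) = dB op hq e a + dB op hq e b :=
      fun a b => dB_add op hq e hp a b
    rw [op_affine op hq e hp]
    rw [op_affine op hq e hp p q, op_affine op hq e hp u v]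
    simp only [br, hA2, hB2]
    abel
  have h := hp x (dZero op e) (dZero op e) y
  rw [E, E] at h
  have h2 := add_right_cancel h
  exact h2

theorem isQuasigroupOp_pOp (k r : ℕ)
    (hc : dNsmul op hq e r (dC op hq e) ∈ Tset op hq e k) :
    IsQuasigroupOp (pOp op hq e hp k r hc) := by
  set rc := dNsmul op hq e r (dC op hq e) with hrc
  constructor
  · intro a
    constructor
    · intro y y' h
      have hv := congrArg Subtype.val h
      rw [pOp_val, pOp_val] at hv
      have h1 : dAdd op hq e (dA op hq e a.1) (dB op hq e y.1) =
          dAdd op hq e (dA op hq e a.1) (dB op hq e y'.1) :=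
        (dR op hq e rc).injective hv
      have h2 : dB op hq e y.1 = dB op hq e y'.1 :=
        (dL op hq e (dA op hq e a.1)).injective h1
      exact Subtype.ext ((dB op hq e).injective h2)
    · intro z
      refine ⟨⟨(dB op hq e).symm ((dL op hq e (dA op hq e a.1)).symm
          ((dR op hq e rc).symm z.1)), ?_⟩, ?_⟩
      · exact mem_Tset_dB_symm op hq e hp (mem_Tset_dL_symm op hq e hp
          (mem_Tset_dA op hq e hp a.2) (mem_Tset_dR_symm op hq e hp hc z.2))
      · apply Subtype.ext
        rw [pOp_val, Equiv.apply_symm_apply]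
        rw [show dAdd op hq e (dA op hq e a.1) ((dL op hq e (dA op hq e a.1)).symm
            ((dR op hq e rc).symm z.1)) = (dR op hq e rc).symm z.1 from by
          rw [← dL_apply]; exact Equiv.apply_symm_apply _ _]
        rw [show dAdd op hq e ((dR op hq e rc).symm z.1) rc = z.1 from by
          rw [← dR_apply]; exact Equiv.apply_symm_apply _ _]
  · intro a
    constructor
    · intro y y' h
      have hv := congrArg Subtype.val h
      rw [pOp_val, pOp_val] at hv
      have h1 : dAdd op hq e (dA op hq e y.1) (dB op hq e a.1) =
          dAdd op hq e (dA op hq e y'.1) (dB op hq e a.1) :=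
        (dR op hq e rc).injective hv
      have h2 : dA op hq e y.1 = dA op hq e y'.1 :=
        (dR op hq e (dB op hq e a.1)).injective h1
      exact Subtype.ext ((dA op hq e).injective h2)
    · intro z
      refine ⟨⟨(dA op hq e).symm ((dR op hq e (dB op hq e a.1)).symm
          ((dR op hq e rc).symm z.1)), ?_⟩, ?_⟩
      · exact mem_Tset_dA_symm op hq e hp (mem_Tset_dR_symm op hq e hp
          (mem_Tset_dB op hq e hp a.2) (mem_Tset_dR_symm op hq e hp hc z.2))
      · apply Subtype.ext
        rw [pOp_val, Equiv.apply_symm_apply]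
        rw [show dAdd op hq e ((dR op hq e (dB op hq e a.1)).symm
            ((dR op hq e rc).symm z.1)) (dB op hq e a.1) = (dR op hq e rc).symm z.1 from by
          rw [← dR_apply]; exact Equiv.apply_symm_apply _ _]
        rw [show dAdd op hq e ((dR op hq e rc).symm z.1) rc = z.1 from by
          rw [← dR_apply]; exact Equiv.apply_symm_apply _ _]

theorem isParamedial_pOp (k r : ℕ)
    (hc : dNsmul op hq e r (dC op hq e) ∈ Tset op hq e k) :
    IsParamedial (pOp op hq e hp k r hc) := by
  letI : AddCommGroup Q := dACG op hq e hp
  have br : ∀ a b : Q, dAdd op hq e a b = a + b := fun _ _ => rfl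
  intro x y u v
  apply Subtype.ext
  simp only [pOp_val]
  have E2 : ∀ s p q w z : Q,
      dAdd op hq e (dAdd op hq e (dA op hq e (dAdd op hq e (dAdd op hq e (dA op hq e p)
        (dB op hq e q)) s)) (dB op hq e (dAdd op hq e (dAdd op hq e (dA op hq e w)
        (dB op hq e z)) s))) s =
      (dA op hq e (dA op hq e p) + dB op hq e (dB op hq e z)) +
      ((dA op hq e (dB op hq e q) + dB op hq e (dA op hq e w)) +
        (dA op hq e s + (dB op hq e s + s))) := by
    intro s p q w z
    have hA2 : ∀ a b : Q, dA op hq e (a + b) = dA op hq e a + dA op hq e b :=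
      fun a b => dA_add op hq e hp a b
    have hB2 : ∀ a b : Q, dB op hq e (a + b) = dB op hq e a + dB op hq e b :=
      fun a b => dB_add op hq e hp a b
    simp only [br, hA2, hB2]
    abel
  have hkey : dA op hq e (dA op hq e x.1) + dB op hq e (dB op hq e v.1) =
      dA op hq e (dA op hq e v.1) + dB op hq e (dB op hq e x.1) :=
    key_AB op hq e hp x.1 v.1
  rw [E2, E2, hkey]

theorem dNsmul_eq_zero_of_dvd [Finite Q] {N k : ℕ} (hcard : Nat.card Q = N)
    (h : N ∣ k) (x : Q) : dNsmul op hq e k x = dZero op e := by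
  obtain ⟨t, rfl⟩ := h
  rw [dNsmul_mul op hq e hp, dNsmul_card op hq e hp hcard]

theorem dNsmul_eq_of_modEq {k : ℕ} {x : Q} (hx : x ∈ Tset op hq e k) {a b : ℕ}
    (hab : a ≡ b [MOD k]) : dNsmul op hq e a x = dNsmul op hq e b x := by
  rw [dNsmul_mod op hq e hp hx a, dNsmul_mod op hq e hp hx b, hab]

section CRT

variable {m n : ℕ} (hco : Nat.Coprime m n)

/-- CRT coefficient `≡ 1 mod m`, `≡ 0 mod n` -/
noncomputable def rr : ℕ := (Nat.chineseRemainder hco 1 0).1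
/-- CRT coefficient `≡ 0 mod m`, `≡ 1 mod n` -/
noncomputable def rr' : ℕ := (Nat.chineseRemainder hco 0 1).1

omit hp in
theorem rr_mod_m : rr hco ≡ 1 [MOD m] := (Nat.chineseRemainder hco 1 0).2.1
omit hp in
theorem rr_mod_n : rr hco ≡ 0 [MOD n] := (Nat.chineseRemainder hco 1 0).2.2
omit hp in
theorem rr'_mod_m : rr' hco ≡ 0 [MOD m] := (Nat.chineseRemainder hco 0 1).2.1
omit hp in
theorem rr'_mod_n : rr' hco ≡ 1 [MOD n] := (Nat.chineseRemainder hco 0 1).2.2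

theorem nsmul_rr_fix {x : Q} (hx : x ∈ Tset op hq e m) :
    dNsmul op hq e (rr hco) x = x := by
  rw [dNsmul_eq_of_modEq op hq e hp hx (rr_mod_m hco)]
  exact dNsmul_one op hq e x

theorem nsmul_rr'_fix {x : Q} (hx : x ∈ Tset op hq e n) :
    dNsmul op hq e (rr' hco) x = x := by
  rw [dNsmul_eq_of_modEq op hq e hp hx (rr'_mod_n hco)]
  exact dNsmul_one op hq e x

theorem nsmul_rr_kill {x : Q} (hx : x ∈ Tset op hq e n) :
    dNsmul op hq e (rr hco) x = dZero op e := by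
  rw [dNsmul_eq_of_modEq op hq e hp hx (rr_mod_n hco)]
  exact dNsmul_zero op hq e x

theorem nsmul_rr'_kill {x : Q} (hx : x ∈ Tset op hq e m) :
    dNsmul op hq e (rr' hco) x = dZero op e := by
  rw [dNsmul_eq_of_modEq op hq e hp hx (rr'_mod_m hco)]
  exact dNsmul_zero op hq e x

theorem nsmul_rr_mem [Finite Q] (hcard : Nat.card Q = m * n) (q : Q) :
    dNsmul op hq e (rr hco) q ∈ Tset op hq e m := by
  rw [mem_Tset, ← dNsmul_mul op hq e hp]
  apply dNsmul_eq_zero_of_dvd op hq e hp hcard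
  obtain ⟨t, ht⟩ := (Nat.modEq_zero_iff_dvd).mp (rr_mod_n hco)
  exact ⟨t, by rw [ht]; ring⟩

theorem nsmul_rr'_mem [Finite Q] (hcard : Nat.card Q = m * n) (q : Q) :
    dNsmul op hq e (rr' hco) q ∈ Tset op hq e n := by
  rw [mem_Tset, ← dNsmul_mul op hq e hp]
  apply dNsmul_eq_zero_of_dvd op hq e hp hcard
  obtain ⟨t, ht⟩ := (Nat.modEq_zero_iff_dvd).mp (rr'_mod_m hco)
  exact ⟨t, by rw [ht]; ring⟩

omit hp in
theorem rr_add_rr' : rr hco + rr' hco ≡ 1 [MOD m * n] := by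
  rw [← Nat.modEq_and_modEq_iff_modEq_mul hco]
  constructor
  · have := (rr_mod_m hco).add (rr'_mod_m hco)
    simpa using this
  · have := (rr_mod_n hco).add (rr'_mod_n hco)
    simpa using this

theorem nsmul_split [Finite Q] (hcard : Nat.card Q = m * n) (q : Q) :
    dAdd op hq e (dNsmul op hq e (rr hco) q) (dNsmul op hq e (rr' hco) q) = q := by
  rw [← dNsmul_add_index op hq e hp]
  have hq1 : q ∈ Tset op hq e (m * n) := dNsmul_card op hq e hp hcard q
  rw [dNsmul_eq_of_modEq op hq e hp hq1 (rr_add_rr' hco)]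
  exact dNsmul_one op hq e q

/-- the splitting equivalence -/
noncomputable def sEquiv [Finite Q] (hcard : Nat.card Q = m * n) :
    Tset op hq e m × Tset op hq e n ≃ Q where
  toFun p := dAdd op hq e p.1.1 p.2.1
  invFun q := (⟨dNsmul op hq e (rr hco) q, nsmul_rr_mem op hq e hp hco hcard q⟩,
    ⟨dNsmul op hq e (rr' hco) q, nsmul_rr'_mem op hq e hp hco hcard q⟩)
  left_inv p := by
    refine Prod.ext (Subtype.ext ?_) (Subtype.ext ?_)
    · show dNsmul op hq e (rr hco) (dAdd op hq e p.1.1 p.2.1) = p.1.1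
      rw [dNsmul_dAdd op hq e hp, nsmul_rr_fix op hq e hp hco p.1.2,
        nsmul_rr_kill op hq e hp hco p.2.2, dAdd_zero]
    · show dNsmul op hq e (rr' hco) (dAdd op hq e p.1.1 p.2.1) = p.2.1
      rw [dNsmul_dAdd op hq e hp, nsmul_rr'_kill op hq e hp hco p.1.2,
        nsmul_rr'_fix op hq e hp hco p.2.2, zero_dAdd]
  right_inv q := nsmul_split op hq e hp hco hcard q

theorem opIso_pOp_prod [Finite Q] (hcard : Nat.card Q = m * n)
    (hcm : dNsmul op hq e (rr hco) (dC op hq e) ∈ Tset op hq e m)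
    (hcn : dNsmul op hq e (rr' hco) (dC op hq e) ∈ Tset op hq e n) :
    OpIso (prodOp (pOp op hq e hp m (rr hco) hcm) (pOp op hq e hp n (rr' hco) hcn)) op := by
  refine ⟨sEquiv op hq e hp hco hcard, fun X Y => ?_⟩
  letI : AddCommGroup Q := dACG op hq e hp
  have br : ∀ a b : Q, dAdd op hq e a b = a + b := fun _ _ => rfl
  have hA2 : ∀ a b : Q, dA op hq e (a + b) = dA op hq e a + dA op hq e b :=
    fun a b => dA_add op hq e hp a b
  have hB2 : ∀ a b : Q, dB op hq e (a + b) = dB op hq e a + dB op hq e b :=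
    fun a b => dB_add op hq e hp a b
  show dAdd op hq e (pOp op hq e hp m (rr hco) hcm X.1 Y.1).1
      (pOp op hq e hp n (rr' hco) hcn X.2 Y.2).1 =
    op (dAdd op hq e X.1.1 X.2.1) (dAdd op hq e Y.1.1 Y.2.1)
  rw [pOp_val, pOp_val, op_affine op hq e hp]
  have hC : dNsmul op hq e (rr hco) (dC op hq e) + dNsmul op hq e (rr' hco) (dC op hq e) =
      dC op hq e := nsmul_split op hq e hp hco hcard (dC op hq e)
  simp only [br, hA2, hB2]
  conv_rhs => rw [← hC]
  abel

theorem card_Tset_eq [Finite Q] (hco : Nat.Coprime m n) (hm : 0 < m) (hn : 0 < n)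
    (hcard : Nat.card Q = m * n) :
    Nat.card (Tset op hq e m) = m ∧ Nat.card (Tset op hq e n) = n := by
  letI : AddCommGroup Q := dACG op hq e hp
  have brn : ∀ (k : ℕ) (y : Q), dNsmul op hq e k y = k • y := by
    intro k y
    induction k with
    | zero => exact (zero_nsmul y).symm
    | succ k ih =>
      rw [dNsmul_succ, ih, succ_nsmul, add_comm]
      rfl
  have mkSub : ∀ k : ℕ, ∃ S : AddSubgroup Q, ∀ x : Q, x ∈ S ↔ x ∈ Tset op hq e k := by
    intro k
    have hneg : ∀ {x : Q}, x ∈ Tset op hq e k → -x ∈ Tset op hq e k := by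
      intro x hx
      have hx' : k • x = 0 := by rw [← brn]; exact hx
      show dNsmul op hq e k (-x) = dZero op e
      rw [brn]
      show k • (-x) = (0 : Q)
      have h2 : k • (-x) + k • x = 0 := by rw [← nsmul_add, neg_add_cancel, nsmul_zero]
      rwa [hx', add_zero] at h2
    let S : AddSubgroup Q :=
      { carrier := Tset op hq e k
        add_mem' := fun ha hb => mem_Tset_dAdd op hq e hp ha hb
        zero_mem' := zero_mem_Tset op hq e
        neg_mem' := hneg }
    exact ⟨S, fun x => Iff.rfl⟩
  have cauchy : ∀ (k p : ℕ), p.Prime → p ∣ Nat.card (Tset op hq e k) → p ∣ k := by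
    intro k p pp hdvd
    obtain ⟨S, hS⟩ := mkSub k
    have hc : Nat.card S = Nat.card (Tset op hq e k) :=
      Nat.card_congr ⟨fun x => ⟨x.1, (hS x.1).mp x.2⟩, fun x => ⟨x.1, (hS x.1).mpr x.2⟩,
        fun _ => rfl, fun _ => rfl⟩
    letI : Fintype S := Fintype.ofFinite _
    haveI : Fact p.Prime := ⟨pp⟩
    have hdvd' : p ∣ Fintype.card S := by rw [← Nat.card_eq_fintype_card, hc]; exact hdvd
    obtain ⟨g, hg⟩ := exists_prime_addOrderOf_dvd_card p hdvd'
    have hgk : k • (g : Q) = 0 := by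
      have := (hS g.1).mp g.2
      rw [mem_Tset, brn] at this
      exact this
    have hdvd2 : addOrderOf (g : Q) ∣ k := addOrderOf_dvd_of_nsmul_eq_zero hgk
    rwa [AddSubgroup.addOrderOf_coe, hg] at hdvd2
  have copK : ∀ k l : ℕ, Nat.Coprime k l → Nat.Coprime (Nat.card (Tset op hq e k)) l := by
    intro k l hkl
    by_contra hne
    obtain ⟨p, pp, pdvd⟩ := Nat.exists_prime_and_dvd hne
    have h1 : p ∣ Nat.card (Tset op hq e k) := pdvd.trans (Nat.gcd_dvd_left _ _)
    have h2 : p ∣ l := pdvd.trans (Nat.gcd_dvd_right _ _)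
    have h3 : p ∣ k := cauchy k p pp h1
    have : p ∣ 1 := hkl ▸ Nat.dvd_gcd h3 h2
    exact pp.one_lt.ne' (Nat.dvd_one.mp this)
  have hprod : Nat.card (Tset op hq e m) * Nat.card (Tset op hq e n) = m * n := by
    rw [← Nat.card_prod, Nat.card_congr (sEquiv op hq e hp hco hcard), hcard]
  haveI : Nonempty (Tset op hq e m) := ⟨⟨dZero op e, zero_mem_Tset op hq e⟩⟩
  haveI : Nonempty (Tset op hq e n) := ⟨⟨dZero op e, zero_mem_Tset op hq e⟩⟩
  set a := Nat.card (Tset op hq e m) with ha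
  set b := Nat.card (Tset op hq e n) with hb
  have hposn : 0 < b := Nat.card_pos
  have hdm : a ∣ m := (copK m n hco).dvd_of_dvd_mul_right ⟨b, hprod.symm⟩
  have hdn : b ∣ n := (copK n m hco.symm).dvd_of_dvd_mul_left ⟨a, by rw [← hprod]; ring⟩
  obtain ⟨kb, hkb⟩ := hdn
  have hm2 : a = m * kb := Nat.eq_of_mul_eq_mul_right hposn (by rw [hprod, hkb]; ring)
  have hmm : a = m := Nat.dvd_antisymm hdm ⟨kb, hm2⟩
  refine ⟨hmm, ?_⟩
  have h3 : m * b = m * n := by rw [← hprod, hmm]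
  exact Nat.eq_of_mul_eq_mul_left hm h3

end CRT



end Core

section Transport

variable {Q Q' : Type*} (op : Q → Q → Q) (hq : IsQuasigroupOp op) (e : Q)
  (op' : Q' → Q' → Q') (hq' : IsQuasigroupOp op') (f : Q ≃ Q')
  (hf : ∀ x y, f (op x y) = op' (f x) (f y))

include hf

theorem f_aE_symm (x : Q) : f ((aE op hq e).symm x) = (aE op' hq' (f e)).symm (f x) := by
  apply (aE op' hq' (f e)).injective
  rw [Equiv.apply_symm_apply, aE_apply, ← hf]
  have : op ((aE op hq e).symm x) e = x := Equiv.apply_symm_apply (aE op hq e) x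
  rw [this]

theorem f_bE_symm (x : Q) : f ((bE op hq e).symm x) = (bE op' hq' (f e)).symm (f x) := by
  apply (bE op' hq' (f e)).injective
  rw [Equiv.apply_symm_apply, bE_apply, ← hf]
  have : op e ((bE op hq e).symm x) = x := Equiv.apply_symm_apply (bE op hq e) x
  rw [this]

theorem f_dAdd (x y : Q) : f (dAdd op hq e x y) =
    dAdd op' hq' (f e) (f x) (f y) := by
  rw [dAdd, hf, f_aE_symm op hq e op' hq' f hf, f_bE_symm op hq e op' hq' f hf, dAdd]

theorem f_dZero : f (dZero op e) = dZero op' (f e) := by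
  rw [dZero, hf, dZero]

theorem f_dNsmul (k : ℕ) (x : Q) : f (dNsmul op hq e k x) =
    dNsmul op' hq' (f e) k (f x) := by
  induction k with
  | zero => rw [dNsmul_zero, dNsmul_zero, f_dZero op e op' f hf]
  | succ k ih => rw [dNsmul_succ, dNsmul_succ, f_dAdd op hq e op' hq' f hf, ih]

theorem f_za : f (za op e) = za op' (f e) := by
  rw [za, hf, f_dZero op e op' f hf, za]

theorem f_b0 : f (b0 op e) = b0 op' (f e) := by
  rw [b0, hf, f_dZero op e op' f hf, b0]

theorem f_dL_symm (a w : Q) : f ((dL op hq e a).symm w) =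
    (dL op' hq' (f e) (f a)).symm (f w) := by
  apply (dL op' hq' (f e) (f a)).injective
  rw [Equiv.apply_symm_apply, dL_apply, ← f_dAdd op hq e op' hq' f hf]
  have : dAdd op hq e a ((dL op hq e a).symm w) = w := by
    rw [← dL_apply]; exact Equiv.apply_symm_apply _ _
  rw [this]

theorem f_dR_symm (b w : Q) : f ((dR op hq e b).symm w) =
    (dR op' hq' (f e) (f b)).symm (f w) := by
  apply (dR op' hq' (f e) (f b)).injective
  rw [Equiv.apply_symm_apply, dR_apply, ← f_dAdd op hq e op' hq' f hf]
  have : dAdd op hq e ((dR op hq e b).symm w) b = w := by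
    rw [← dR_apply]; exact Equiv.apply_symm_apply _ _
  rw [this]

theorem f_dA (x : Q) : f (dA op hq e x) = dA op' hq' (f e) (f x) := by
  have h1 : dA op hq e x = (dL op hq e (za op e)).symm (op x e) := rfl
  have h2 : dA op' hq' (f e) (f x) =
      (dL op' hq' (f e) (za op' (f e))).symm (op' (f x) (f e)) := rfl
  rw [h1, h2, f_dL_symm op hq e op' hq' f hf, f_za op e op' f hf, hf]

theorem f_dB (x : Q) : f (dB op hq e x) = dB op' hq' (f e) (f x) := by
  have h1 : dB op hq e x = (dR op hq e (b0 op e)).symm (op e x) := rfl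
  have h2 : dB op' hq' (f e) (f x) =
      (dR op' hq' (f e) (b0 op' (f e))).symm (op' (f e) (f x)) := rfl
  rw [h1, h2, f_dR_symm op hq e op' hq' f hf, f_b0 op e op' f hf, hf]

theorem f_dC : f (dC op hq e) = dC op' hq' (f e) := by
  rw [dC, f_dAdd op hq e op' hq' f hf, f_za op e op' f hf, f_b0 op e op' f hf, dC]

theorem f_Tset {k : ℕ} {x : Q} (hx : x ∈ Tset op hq e k) :
    f x ∈ Tset op' hq' (f e) k := by
  rw [mem_Tset] at hx ⊢
  rw [← f_dNsmul op hq e op' hq' f hf, hx, f_dZero op e op' f hf]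

theorem opIso_pOp_transport (hp : IsParamedial op) (hp' : IsParamedial op')
    (k r : ℕ) (hc : dNsmul op hq e r (dC op hq e) ∈ Tset op hq e k)
    (hc' : dNsmul op' hq' (f e) r (dC op' hq' (f e)) ∈ Tset op' hq' (f e) k) :
    OpIso (pOp op hq e hp k r hc) (pOp op' hq' (f e) hp' k r hc') := by
  have hmem : ∀ y : Q', y ∈ Tset op' hq' (f e) k → f.symm y ∈ Tset op hq e k := by
    intro y hy
    rw [mem_Tset]
    apply f.injective
    rw [f_dNsmul op hq e op' hq' f hf, Equiv.apply_symm_apply, f_dZero op e op' f hf]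
    exact hy
  refine ⟨⟨fun x => ⟨f x.1, f_Tset op hq e op' hq' f hf x.2⟩,
    fun y => ⟨f.symm y.1, hmem y.1 y.2⟩,
    fun x => Subtype.ext (f.symm_apply_apply x.1),
    fun y => Subtype.ext (f.apply_symm_apply y.1)⟩, fun x y => ?_⟩
  apply Subtype.ext
  show f (pOp op hq e hp k r hc x y).1 = _
  rw [pOp_val, pOp_val, f_dAdd op hq e op' hq' f hf, f_dAdd op hq e op' hq' f hf,
    f_dA op hq e op' hq' f hf, f_dB op hq e op' hq' f hf,
    f_dNsmul op hq e op' hq' f hf, f_dC op hq e op' hq' f hf]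
  rfl

end Transport

section Prod

variable {Q₁ Q₂ : Type*} (o₁ : Q₁ → Q₁ → Q₁) (hq₁ : IsQuasigroupOp o₁) (e₁ : Q₁)
  (o₂ : Q₂ → Q₂ → Q₂) (hq₂ : IsQuasigroupOp o₂) (e₂ : Q₂)

theorem prod_aE_symm (x : Q₁ × Q₂) :
    (aE (prodOp o₁ o₂) (isQuasigroupOp_prodOp hq₁ hq₂) (e₁, e₂)).symm x =
    ((aE o₁ hq₁ e₁).symm x.1, (aE o₂ hq₂ e₂).symm x.2) := by
  rw [Equiv.symm_apply_eq]
  show x = (o₁ ((aE o₁ hq₁ e₁).symm x.1) e₁, o₂ ((aE o₂ hq₂ e₂).symm x.2) e₂)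
  exact Prod.ext (Equiv.apply_symm_apply (aE o₁ hq₁ e₁) x.1).symm
    (Equiv.apply_symm_apply (aE o₂ hq₂ e₂) x.2).symm

theorem prod_bE_symm (x : Q₁ × Q₂) :
    (bE (prodOp o₁ o₂) (isQuasigroupOp_prodOp hq₁ hq₂) (e₁, e₂)).symm x =
    ((bE o₁ hq₁ e₁).symm x.1, (bE o₂ hq₂ e₂).symm x.2) := by
  rw [Equiv.symm_apply_eq]
  show x = (o₁ e₁ ((bE o₁ hq₁ e₁).symm x.1), o₂ e₂ ((bE o₂ hq₂ e₂).symm x.2))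
  exact Prod.ext (Equiv.apply_symm_apply (bE o₁ hq₁ e₁) x.1).symm
    (Equiv.apply_symm_apply (bE o₂ hq₂ e₂) x.2).symm

theorem prod_dAdd (x y : Q₁ × Q₂) :
    dAdd (prodOp o₁ o₂) (isQuasigroupOp_prodOp hq₁ hq₂) (e₁, e₂) x y =
    (dAdd o₁ hq₁ e₁ x.1 y.1, dAdd o₂ hq₂ e₂ x.2 y.2) := by
  show prodOp o₁ o₂ ((aE (prodOp o₁ o₂) (isQuasigroupOp_prodOp hq₁ hq₂) (e₁, e₂)).symm x)
    ((bE (prodOp o₁ o₂) (isQuasigroupOp_prodOp hq₁ hq₂) (e₁, e₂)).symm y) = _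
  rw [prod_aE_symm, prod_bE_symm]
  rfl

theorem prod_dZero :
    dZero (prodOp o₁ o₂) ((e₁, e₂) : Q₁ × Q₂) = (dZero o₁ e₁, dZero o₂ e₂) := rfl

theorem prod_dNsmul (k : ℕ) (x : Q₁ × Q₂) :
    dNsmul (prodOp o₁ o₂) (isQuasigroupOp_prodOp hq₁ hq₂) (e₁, e₂) k x =
    (dNsmul o₁ hq₁ e₁ k x.1, dNsmul o₂ hq₂ e₂ k x.2) := by
  induction k with
  | zero => rfl
  | succ k ih =>
    rw [dNsmul_succ, ih, prod_dAdd]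
    rfl

theorem prod_dL_symm (a w : Q₁ × Q₂) :
    (dL (prodOp o₁ o₂) (isQuasigroupOp_prodOp hq₁ hq₂) (e₁, e₂) a).symm w =
    ((dL o₁ hq₁ e₁ a.1).symm w.1, (dL o₂ hq₂ e₂ a.2).symm w.2) := by
  rw [Equiv.symm_apply_eq, dL_apply, prod_dAdd]
  refine Prod.ext ?_ ?_
  · show w.1 = dAdd o₁ hq₁ e₁ a.1 ((dL o₁ hq₁ e₁ a.1).symm w.1)
    rw [← dL_apply]
    exact (Equiv.apply_symm_apply _ _).symm
  · show w.2 = dAdd o₂ hq₂ e₂ a.2 ((dL o₂ hq₂ e₂ a.2).symm w.2)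
    rw [← dL_apply]
    exact (Equiv.apply_symm_apply _ _).symm

theorem prod_dR_symm (b w : Q₁ × Q₂) :
    (dR (prodOp o₁ o₂) (isQuasigroupOp_prodOp hq₁ hq₂) (e₁, e₂) b).symm w =
    ((dR o₁ hq₁ e₁ b.1).symm w.1, (dR o₂ hq₂ e₂ b.2).symm w.2) := by
  rw [Equiv.symm_apply_eq, dR_apply, prod_dAdd]
  refine Prod.ext ?_ ?_
  · show w.1 = dAdd o₁ hq₁ e₁ ((dR o₁ hq₁ e₁ b.1).symm w.1) b.1
    rw [← dR_apply]
    exact (Equiv.apply_symm_apply _ _).symm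
  · show w.2 = dAdd o₂ hq₂ e₂ ((dR o₂ hq₂ e₂ b.2).symm w.2) b.2
    rw [← dR_apply]
    exact (Equiv.apply_symm_apply _ _).symm

theorem prod_dA (x : Q₁ × Q₂) :
    dA (prodOp o₁ o₂) (isQuasigroupOp_prodOp hq₁ hq₂) (e₁, e₂) x =
    (dA o₁ hq₁ e₁ x.1, dA o₂ hq₂ e₂ x.2) := by
  have h1 : dA (prodOp o₁ o₂) (isQuasigroupOp_prodOp hq₁ hq₂) (e₁, e₂) x =
      (dL (prodOp o₁ o₂) (isQuasigroupOp_prodOp hq₁ hq₂) (e₁, e₂)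
        (za (prodOp o₁ o₂) (e₁, e₂))).symm
      (prodOp o₁ o₂ x (e₁, e₂)) := rfl
  rw [h1, prod_dL_symm]
  rfl

theorem prod_dB (x : Q₁ × Q₂) :
    dB (prodOp o₁ o₂) (isQuasigroupOp_prodOp hq₁ hq₂) (e₁, e₂) x =
    (dB o₁ hq₁ e₁ x.1, dB o₂ hq₂ e₂ x.2) := by
  have h1 : dB (prodOp o₁ o₂) (isQuasigroupOp_prodOp hq₁ hq₂) (e₁, e₂) x =
      (dR (prodOp o₁ o₂) (isQuasigroupOp_prodOp hq₁ hq₂) (e₁, e₂)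
        (b0 (prodOp o₁ o₂) (e₁, e₂))).symm
      (prodOp o₁ o₂ (e₁, e₂) x) := rfl
  rw [h1, prod_dR_symm]
  rfl

theorem prod_dC :
    dC (prodOp o₁ o₂) (isQuasigroupOp_prodOp hq₁ hq₂) (e₁, e₂) =
    (dC o₁ hq₁ e₁, dC o₂ hq₂ e₂) := by
  rw [dC, prod_dAdd]
  rfl

theorem prod_mem_Tset {k : ℕ} {x : Q₁ × Q₂} :
    x ∈ Tset (prodOp o₁ o₂) (isQuasigroupOp_prodOp hq₁ hq₂) (e₁, e₂) k ↔
    x.1 ∈ Tset o₁ hq₁ e₁ k ∧ x.2 ∈ Tset o₂ hq₂ e₂ k := by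
  rw [mem_Tset, mem_Tset, mem_Tset, prod_dNsmul, prod_dZero, Prod.ext_iff]

end Prod

section Factor

variable {Q : Type*} (op : Q → Q → Q) (hq : IsQuasigroupOp op) (e : Q)
  (hp : IsParamedial op)

include hp

theorem allTset [Finite Q] {k : ℕ} (hcard : Nat.card Q = k) (x : Q) :
    x ∈ Tset op hq e k := dNsmul_card op hq e hp hcard x

theorem Tset_coprime_eq_zero [Finite Q] {m n : ℕ} (hco : Nat.Coprime m n)
    (hcard : Nat.card Q = n) {x : Q} (hx : x ∈ Tset op hq e m) : x = dZero op e := by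
  have h1 := nsmul_rr_fix op hq e hp hco hx
  have h2 := nsmul_rr_kill op hq e hp hco (dNsmul_card op hq e hp hcard x)
  rw [h1] at h2
  exact h2

theorem Tset_coprime_eq_zero' [Finite Q] {m n : ℕ} (hco : Nat.Coprime m n)
    (hcard : Nat.card Q = m) {x : Q} (hx : x ∈ Tset op hq e n) : x = dZero op e := by
  have h1 := nsmul_rr'_fix op hq e hp hco hx
  have h2 := nsmul_rr'_kill op hq e hp hco (dNsmul_card op hq e hp hcard x)
  rw [h1] at h2
  exact h2

end Factor

section FactorIso

variable {Q₁ Q₂ : Type*} (o₁ : Q₁ → Q₁ → Q₁) (hq₁ : IsQuasigroupOp o₁) (e₁ : Q₁)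
  (hp₁ : IsParamedial o₁)
  (o₂ : Q₂ → Q₂ → Q₂) (hq₂ : IsQuasigroupOp o₂) (e₂ : Q₂) (hp₂ : IsParamedial o₂)
  {m n : ℕ} (hco : Nat.Coprime m n)

theorem opIso_factor_m [Finite Q₁] [Finite Q₂]
    (hcard₁ : Nat.card Q₁ = m) (hcard₂ : Nat.card Q₂ = n)
    (hc : dNsmul (prodOp o₁ o₂) (isQuasigroupOp_prodOp hq₁ hq₂) (e₁, e₂) (rr hco)
      (dC (prodOp o₁ o₂) (isQuasigroupOp_prodOp hq₁ hq₂) (e₁, e₂)) ∈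
      Tset (prodOp o₁ o₂) (isQuasigroupOp_prodOp hq₁ hq₂) (e₁, e₂) m) :
    OpIso o₁ (pOp (prodOp o₁ o₂) (isQuasigroupOp_prodOp hq₁ hq₂) (e₁, e₂)
      (isParamedial_prodOp hp₁ hp₂) m (rr hco) hc) := by
  refine ⟨⟨fun x => ⟨(x, dZero o₂ e₂), (prod_mem_Tset o₁ hq₁ e₁ o₂ hq₂ e₂).mpr
      ⟨allTset o₁ hq₁ e₁ hp₁ hcard₁ x, zero_mem_Tset o₂ hq₂ e₂⟩⟩,
    fun t => t.1.1, fun x => rfl, fun t => Subtype.ext (Prod.ext rfl ?_)⟩, fun x y => ?_⟩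
  · exact (Tset_coprime_eq_zero o₂ hq₂ e₂ hp₂ hco hcard₂
      ((prod_mem_Tset o₁ hq₁ e₁ o₂ hq₂ e₂).mp t.2).2).symm
  · apply Subtype.ext
    show (o₁ x y, dZero o₂ e₂) = _
    rw [pOp_val, prod_dAdd, prod_dAdd, prod_dA, prod_dB, prod_dNsmul, prod_dC]
    refine Prod.ext ?_ ?_
    · show o₁ x y = dAdd o₁ hq₁ e₁ (dAdd o₁ hq₁ e₁ (dA o₁ hq₁ e₁ x) (dB o₁ hq₁ e₁ y))
        (dNsmul o₁ hq₁ e₁ (rr hco) (dC o₁ hq₁ e₁))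
      rw [nsmul_rr_fix o₁ hq₁ e₁ hp₁ hco (allTset o₁ hq₁ e₁ hp₁ hcard₁ _)]
      exact op_affine o₁ hq₁ e₁ hp₁ x y
    · show dZero o₂ e₂ = dAdd o₂ hq₂ e₂ (dAdd o₂ hq₂ e₂ (dA o₂ hq₂ e₂ (dZero o₂ e₂))
        (dB o₂ hq₂ e₂ (dZero o₂ e₂)))
        (dNsmul o₂ hq₂ e₂ (rr hco) (dC o₂ hq₂ e₂))
      rw [dA_zero, dB_zero, dAdd_zero,
        nsmul_rr_kill o₂ hq₂ e₂ hp₂ hco (allTset o₂ hq₂ e₂ hp₂ hcard₂ _), dAdd_zero]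

theorem opIso_factor_n [Finite Q₁] [Finite Q₂]
    (hcard₁ : Nat.card Q₁ = m) (hcard₂ : Nat.card Q₂ = n)
    (hc : dNsmul (prodOp o₁ o₂) (isQuasigroupOp_prodOp hq₁ hq₂) (e₁, e₂) (rr' hco)
      (dC (prodOp o₁ o₂) (isQuasigroupOp_prodOp hq₁ hq₂) (e₁, e₂)) ∈
      Tset (prodOp o₁ o₂) (isQuasigroupOp_prodOp hq₁ hq₂) (e₁, e₂) n) :
    OpIso o₂ (pOp (prodOp o₁ o₂) (isQuasigroupOp_prodOp hq₁ hq₂) (e₁, e₂)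
      (isParamedial_prodOp hp₁ hp₂) n (rr' hco) hc) := by
  refine ⟨⟨fun x => ⟨(dZero o₁ e₁, x), (prod_mem_Tset o₁ hq₁ e₁ o₂ hq₂ e₂).mpr
      ⟨zero_mem_Tset o₁ hq₁ e₁, allTset o₂ hq₂ e₂ hp₂ hcard₂ x⟩⟩,
    fun t => t.1.2, fun x => rfl, fun t => Subtype.ext (Prod.ext ?_ rfl)⟩, fun x y => ?_⟩
  · exact (Tset_coprime_eq_zero' o₁ hq₁ e₁ hp₁ hco hcard₁
      ((prod_mem_Tset o₁ hq₁ e₁ o₂ hq₂ e₂).mp t.2).1).symm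
  · apply Subtype.ext
    show (dZero o₁ e₁, o₂ x y) = _
    rw [pOp_val, prod_dAdd, prod_dAdd, prod_dA, prod_dB, prod_dNsmul, prod_dC]
    refine Prod.ext ?_ ?_
    · show dZero o₁ e₁ = dAdd o₁ hq₁ e₁ (dAdd o₁ hq₁ e₁ (dA o₁ hq₁ e₁ (dZero o₁ e₁))
        (dB o₁ hq₁ e₁ (dZero o₁ e₁)))
        (dNsmul o₁ hq₁ e₁ (rr' hco) (dC o₁ hq₁ e₁))
      rw [dA_zero, dB_zero, dAdd_zero,
        nsmul_rr'_kill o₁ hq₁ e₁ hp₁ hco (allTset o₁ hq₁ e₁ hp₁ hcard₁ _), dAdd_zero]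
    · show o₂ x y = dAdd o₂ hq₂ e₂ (dAdd o₂ hq₂ e₂ (dA o₂ hq₂ e₂ x) (dB o₂ hq₂ e₂ y))
        (dNsmul o₂ hq₂ e₂ (rr' hco) (dC o₂ hq₂ e₂))
      rw [nsmul_rr'_fix o₂ hq₂ e₂ hp₂ hco (allTset o₂ hq₂ e₂ hp₂ hcard₂ _)]
      exact op_affine o₂ hq₂ e₂ hp₂ x y

end FactorIso

theorem opIso_factors_of_prod {Q₁ Q₂ Q₁' Q₂' : Type*}
    [Finite Q₁] [Finite Q₂] [Finite Q₁'] [Finite Q₂']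
    {o₁ : Q₁ → Q₁ → Q₁} {o₂ : Q₂ → Q₂ → Q₂} {o₁' : Q₁' → Q₁' → Q₁'} {o₂' : Q₂' → Q₂' → Q₂'}
    (hq₁ : IsQuasigroupOp o₁) (hp₁ : IsParamedial o₁)
    (hq₂ : IsQuasigroupOp o₂) (hp₂ : IsParamedial o₂)
    (hq₁' : IsQuasigroupOp o₁') (hp₁' : IsParamedial o₁')
    (hq₂' : IsQuasigroupOp o₂') (hp₂' : IsParamedial o₂')
    {m n : ℕ} (hm : 0 < m) (hn : 0 < n) (hco : Nat.Coprime m n)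
    (hc₁ : Nat.card Q₁ = m) (hc₂ : Nat.card Q₂ = n)
    (hc₁' : Nat.card Q₁' = m) (hc₂' : Nat.card Q₂' = n)
    (hiso : OpIso (prodOp o₁ o₂) (prodOp o₁' o₂')) : OpIso o₁ o₁' ∧ OpIso o₂ o₂' := by
  obtain ⟨f, hf⟩ := hiso
  obtain ⟨⟨e₁⟩, -⟩ := Nat.card_pos_iff.mp (show 0 < Nat.card Q₁ by rw [hc₁]; exact hm)
  obtain ⟨⟨e₂⟩, -⟩ := Nat.card_pos_iff.mp (show 0 < Nat.card Q₂ by rw [hc₂]; exact hn)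
  have hqP := isQuasigroupOp_prodOp hq₁ hq₂
  have hpP := isParamedial_prodOp hp₁ hp₂
  have hqP' := isQuasigroupOp_prodOp hq₁' hq₂'
  have hpP' := isParamedial_prodOp hp₁' hp₂'
  have hcardP : Nat.card (Q₁ × Q₂) = m * n := by rw [Nat.card_prod, hc₁, hc₂]
  have hcardP' : Nat.card (Q₁' × Q₂') = m * n := by rw [Nat.card_prod, hc₁', hc₂']
  have hcP := nsmul_rr_mem (prodOp o₁ o₂) hqP (e₁, e₂) hpP hco hcardP
    (dC (prodOp o₁ o₂) hqP (e₁, e₂))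
  have hcP' := nsmul_rr_mem (prodOp o₁' o₂') hqP' (f (e₁, e₂)) hpP' hco hcardP'
    (dC (prodOp o₁' o₂') hqP' (f (e₁, e₂)))
  have hcQ := nsmul_rr'_mem (prodOp o₁ o₂) hqP (e₁, e₂) hpP hco hcardP
    (dC (prodOp o₁ o₂) hqP (e₁, e₂))
  have hcQ' := nsmul_rr'_mem (prodOp o₁' o₂') hqP' (f (e₁, e₂)) hpP' hco hcardP'
    (dC (prodOp o₁' o₂') hqP' (f (e₁, e₂)))
  constructor
  · have t1 := opIso_factor_m o₁ hq₁ e₁ hp₁ o₂ hq₂ e₂ hp₂ hco hc₁ hc₂ hcP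
    have t2 := opIso_pOp_transport (prodOp o₁ o₂) hqP (e₁, e₂) (prodOp o₁' o₂') hqP' f hf
      hpP hpP' m (rr hco) hcP hcP'
    have t3 := opIso_factor_m o₁' hq₁' (f (e₁, e₂)).1 hp₁' o₂' hq₂' (f (e₁, e₂)).2 hp₂'
      hco hc₁' hc₂' (nsmul_rr_mem (prodOp o₁' o₂') hqP' ((f (e₁, e₂)).1, (f (e₁, e₂)).2)
        hpP' hco hcardP' _)
    exact opIso_trans (opIso_trans t1 t2) (opIso_symm t3)
  · have t1 := opIso_factor_n o₁ hq₁ e₁ hp₁ o₂ hq₂ e₂ hp₂ hco hc₁ hc₂ hcQ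
    have t2 := opIso_pOp_transport (prodOp o₁ o₂) hqP (e₁, e₂) (prodOp o₁' o₂') hqP' f hf
      hpP hpP' n (rr' hco) hcQ hcQ'
    have t3 := opIso_factor_n o₁' hq₁' (f (e₁, e₂)).1 hp₁' o₂' hq₂' (f (e₁, e₂)).2 hp₂'
      hco hc₁' hc₂' (nsmul_rr'_mem (prodOp o₁' o₂') hqP' ((f (e₁, e₂)).1, (f (e₁, e₂)).2)
        hpP' hco hcardP' _)
    exact opIso_trans (opIso_trans t1 t2) (opIso_symm t3)

/-- bundled paramedial quasigroup structures on `Fin k` -/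
abbrev PQS (k : ℕ) := {op : Fin k → Fin k → Fin k // IsQuasigroupOp op ∧ IsParamedial op}

/-- isomorphism relation -/
def pRel (k : ℕ) : PQS k → PQS k → Prop := fun a b => OpIso a.1 b.1

theorem pRel_equivalence (k : ℕ) : Equivalence (pRel k) :=
  ⟨fun o => opIso_refl o.1, opIso_symm, opIso_trans⟩

/-- the product construction on `Fin` carriers -/
noncomputable def FF (m n : ℕ) (a : PQS m) (b : PQS n) : PQS (m * n) :=
  ⟨tOp finProdFinEquiv (prodOp a.1 b.1),
   isQuasigroupOp_of_opIso (opIso_tOp _ _) (isQuasigroupOp_prodOp a.2.1 b.2.1),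
   isParamedial_of_opIso (opIso_tOp _ _) (isParamedial_prodOp a.2.2 b.2.2)⟩

theorem FF_iso {m n : ℕ} (a : PQS m) (b : PQS n) :
    OpIso (prodOp a.1 b.1) (FF m n a b).1 := opIso_tOp _ _

theorem FF_congr {m n : ℕ} {a a' : PQS m} {b b' : PQS n}
    (h1 : OpIso a.1 a'.1) (h2 : OpIso b.1 b'.1) :
    OpIso (FF m n a b).1 (FF m n a' b').1 :=
  opIso_trans (opIso_symm (FF_iso a b))
    (opIso_trans (opIso_prodOp_congr h1 h2) (FF_iso a' b'))

/-- the induced map on isomorphism classes -/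
noncomputable def Phi (m n : ℕ) :
    Quot (pRel m) × Quot (pRel n) → Quot (pRel (m * n)) :=
  fun p => Quot.lift₂ (fun a b => Quot.mk (pRel (m * n)) (FF m n a b))
    (fun a _ _ h => Quot.sound (FF_congr (opIso_refl a.1) h))
    (fun _ _ b h => Quot.sound (FF_congr h (opIso_refl b.1)))
    p.1 p.2

theorem Phi_surjective (m n : ℕ) (hm : 0 < m) (hn : 0 < n) (hco : Nat.Coprime m n) :
    Function.Surjective (Phi m n) := by
  intro c
  induction c using Quot.ind with
  | _ o =>
  obtain ⟨hq, hp⟩ := o.2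
  set e : Fin (m * n) := ⟨0, Nat.mul_pos hm hn⟩ with he
  have hcard : Nat.card (Fin (m * n)) = m * n := by simp
  have hcm := nsmul_rr_mem o.1 hq e hp hco hcard (dC o.1 hq e)
  have hcn := nsmul_rr'_mem o.1 hq e hp hco hcard (dC o.1 hq e)
  have iso1 := opIso_pOp_prod o.1 hq e hp hco hcard hcm hcn
  obtain ⟨hTm, hTn⟩ := card_Tset_eq o.1 hq e hp hco hm hn hcard
  letI F1 : Fintype (Tset o.1 hq e m) := Fintype.ofFinite _
  letI F2 : Fintype (Tset o.1 hq e n) := Fintype.ofFinite _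
  let g₁ : Tset o.1 hq e m ≃ Fin m :=
    Fintype.equivFinOfCardEq (by rw [← Nat.card_eq_fintype_card, hTm])
  let g₂ : Tset o.1 hq e n ≃ Fin n :=
    Fintype.equivFinOfCardEq (by rw [← Nat.card_eq_fintype_card, hTn])
  let a : PQS m := ⟨tOp g₁ (pOp o.1 hq e hp m (rr hco) hcm),
    isQuasigroupOp_of_opIso (opIso_tOp _ _) (isQuasigroupOp_pOp o.1 hq e hp m (rr hco) hcm),
    isParamedial_of_opIso (opIso_tOp _ _) (isParamedial_pOp o.1 hq e hp m (rr hco) hcm)⟩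
  let b : PQS n := ⟨tOp g₂ (pOp o.1 hq e hp n (rr' hco) hcn),
    isQuasigroupOp_of_opIso (opIso_tOp _ _) (isQuasigroupOp_pOp o.1 hq e hp n (rr' hco) hcn),
    isParamedial_of_opIso (opIso_tOp _ _) (isParamedial_pOp o.1 hq e hp n (rr' hco) hcn)⟩
  refine ⟨(Quot.mk _ a, Quot.mk _ b), ?_⟩
  show Quot.mk (pRel (m * n)) (FF m n a b) = Quot.mk (pRel (m * n)) o
  apply Quot.sound
  show OpIso (FF m n a b).1 o.1
  refine opIso_trans (opIso_symm (FF_iso a b)) (opIso_trans (opIso_prodOp_congr ?_ ?_) iso1)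
  · exact opIso_symm (opIso_tOp g₁ _)
  · exact opIso_symm (opIso_tOp g₂ _)

theorem Phi_injective (m n : ℕ) (hm : 0 < m) (hn : 0 < n) (hco : Nat.Coprime m n) :
    Function.Injective (Phi m n) := by
  intro p p' h
  obtain ⟨pa, pb⟩ := p
  obtain ⟨pa', pb'⟩ := p'
  induction pa using Quot.ind with
  | _ a =>
  induction pb using Quot.ind with
  | _ b =>
  induction pa' using Quot.ind with
  | _ a' =>
  induction pb' using Quot.ind with
  | _ b' =>
  have h2 : OpIso (FF m n a b).1 (FF m n a' b').1 :=
    ((pRel_equivalence (m * n)).eqvGen_iff).mp (Quot.eqvGen_exact h)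
  have h3 : OpIso (prodOp a.1 b.1) (prodOp a'.1 b'.1) :=
    opIso_trans (FF_iso a b) (opIso_trans h2 (opIso_symm (FF_iso a' b')))
  have hcm : Nat.card (Fin m) = m := by simp
  have hcn : Nat.card (Fin n) = n := by simp
  obtain ⟨i1, i2⟩ := opIso_factors_of_prod a.2.1 a.2.2 b.2.1 b.2.2
    a'.2.1 a'.2.2 b'.2.1 b'.2.2 hm hn hco hcm hcn hcm hcn h3
  exact Prod.ext (Quot.sound i1) (Quot.sound i2)

end PQ

/-- `pqn n` is the number of isomorphism classes of paramedial quasigroups of order `n`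
(every quasigroup of order `n` is isomorphic to one with underlying set `Fin n`). -/
noncomputable def pqn (n : ℕ) : ℕ :=
  Nat.card (Quot fun o₁ o₂ :
      {op : Fin n → Fin n → Fin n // IsQuasigroupOp op ∧ IsParamedial op} =>
    OpIso o₁.1 o₂.1)

theorem pqn_multiplicative (m n : ℕ) (hm : 0 < m) (hn : 0 < n) (hco : Nat.Coprime m n) :
    pqn (m * n) = pqn m * pqn n := by
  have hbij : Function.Bijective (PQ.Phi m n) :=
    ⟨PQ.Phi_injective m n hm hn hco, PQ.Phi_surjective m n hm hn hco⟩
  calc pqn (m * n) = Nat.card (Quot (PQ.pRel (m * n))) := rfl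
    _ = Nat.card (Quot (PQ.pRel m) × Quot (PQ.pRel n)) :=
        (Nat.card_eq_of_bijective _ hbij).symm
    _ = pqn m * pqn n := by rw [Nat.card_prod]; rfl
end

section
/- A paramedial quasigroup cannot admit affine forms over two non-isomorphic groups: if G and H are abelian groups, φ,ψ ∈ Aut(G), φ',ψ' ∈ Aut(H), c ∈ G, c' ∈ H, and the affine quasigroups Aff(G,+,φ,ψ,c) and Aff(H,+,φ',ψ',c') are isomorphic as quasigroups, then the groups G and H are isomorphic. -/
theorem affine_iso_implies_group_iso {G H : Type*} [AddCommGroup G] [AddCommGroup H]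
    (φ ψ : G ≃+ G) (φ' ψ' : H ≃+ H) (c : G) (c' : H)
    (h : OpIso (affOp φ ψ c) (affOp φ' ψ' c')) :
    Nonempty (G ≃+ H) := by
  obtain ⟨f, hf⟩ := h
  have hAB : ∀ u v : G, f (u + v + c) = φ' (f (φ.symm u)) + ψ' (f (ψ.symm v)) + c' := by
    intro u v
    have := hf (φ.symm u) (ψ.symm v)
    simpa [affOp] using this
  have key : ∀ u v : G, f (u + v + c) + f c = f (u + c) + f (v + c) := by
    intro u v
    have h1 := hAB u v
    have h2 := hAB u 0
    have h3 := hAB 0 v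
    have h4 := hAB 0 0
    simp only [add_zero, zero_add] at h1 h2 h3 h4
    rw [h1, h2, h3, h4]
    abel
  refine ⟨AddEquiv.mk' ((Equiv.addRight c).trans (f.trans (Equiv.subRight (f c)))) ?_⟩
  intro x y
  simp only [Equiv.trans_apply, Equiv.coe_addRight, Equiv.subRight_apply]
  have := key x y
  linear_combination (norm := abel) this
end

section
/- Let p be an odd prime and let A be a 2×2 matrix over ℤ/p whose characteristic polynomial is irreducible over ℤ/p and whose trace is nonzero. Then for every 2×2 matrix B over ℤ/p, B² = A² holds if and only if B = A or B = −A. -/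
/-!
By Cayley–Hamilton, `B * B = tr B • B - det B • 1`, so `B * B = A * A` puts `tr B • B` in
`K • A + K • 1`. If `tr B = 0` this makes `A` scalar, impossible as its charpoly has no root;
hence `B = x • A + y • 1`. A nonzero matrix of this form has determinant `y ^ n` or
`(-x) ^ n * χ_A (-y / x)`, so it is invertible: `K[A]` is a field. Since `B` commutes with `A`,
`(B + A) * (B - A) = B * B - A * A = 0`, and one of the factors vanishes.
-/

open Polynomial

namespace Matrix

theorem mul_self_eq_trace_smul_sub_det_smul {R : Type*} [CommRing R]
    (M : Matrix (Fin 2) (Fin 2) R) :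
    M * M = M.trace • M - M.det • 1 := by
  nontriviality R
  have := M.aeval_self_charpoly
  rw [charpoly_fin_two] at this
  simp only [map_add, map_sub, map_mul, aeval_X, aeval_C, map_pow,
    Algebra.algebraMap_eq_smul_one, smul_mul_assoc, one_mul] at this
  rw [← sq]
  linear_combination (norm := module) this

variable {K : Type*} [Field K] {n : Type*} [Fintype n] [DecidableEq n]

theorem det_smul_add_smul_one_eq_zero [Nonempty n] {A : Matrix n n K}
    (hA : ∀ c, ¬ A.charpoly.IsRoot c) {x y : K} (h : (x • A + y • 1).det = 0) :
    x = 0 ∧ y = 0 := by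
  by_cases hx : x = 0
  · subst hx
    simpa [det_smul, Fintype.card_ne_zero] using h
  · refine absurd ?_ (hA (-y / x))
    have : x • A + y • 1 = (-x) • (scalar n (-y / x) - A) := by
      rw [smul_sub, scalar_apply, ← smul_one_eq_diagonal, smul_smul]
      field_simp
      module
    rw [this, det_smul, mul_eq_zero] at h
    simpa [IsRoot, eval_charpoly, hx] using h

theorem eq_or_eq_neg_of_mul_self_eq [Nonempty n] {A B : Matrix n n K}
    (hA : ∀ c, ¬ A.charpoly.IsRoot c) {x y : K} (hB : B = x • A + y • 1) (h : B * B = A * A) :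
    B = A ∨ B = -A := by
  have hcomm : Commute B A := hB ▸ ((Commute.refl A).smul_left x).add_left
    ((Commute.one_left A).smul_left y)
  have hfactor : (B + A) * (B - A) = 0 := by rw [← hcomm.mul_self_sub_mul_self_eq, h, sub_self]
  by_cases hdet : (B - A).det = 0
  · have hsub : B - A = (x - 1) • A + y • 1 := by rw [hB]; module
    obtain ⟨hx, rfl⟩ := det_smul_add_smul_one_eq_zero hA (hsub ▸ hdet)
    left
    rw [hB, sub_eq_zero.mp hx]
    simp
  · have hunit : IsUnit (B - A) := (isUnit_iff_isUnit_det _).mpr (isUnit_iff_ne_zero.mpr hdet)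
    exact .inr (eq_neg_of_add_eq_zero_left (hunit.mul_left_eq_zero.mp hfactor))

theorem exists_eq_smul_add_smul_one_of_mul_self_eq {A B : Matrix (Fin 2) (Fin 2) K}
    (hA : ∀ c, ¬ A.charpoly.IsRoot c) (htr : A.trace ≠ 0) (h : B * B = A * A) :
    ∃ x y : K, B = x • A + y • 1 := by
  have hlin : B.trace • B = A.trace • A + (B.det - A.det) • 1 := by
    rw [mul_self_eq_trace_smul_sub_det_smul, mul_self_eq_trace_smul_sub_det_smul] at h
    linear_combination (norm := module) h
  by_cases hB : B.trace = 0
  · have hscalar : (1 : K) • A + ((B.det - A.det) / A.trace) • 1 = 0 := by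
      rw [hB, zero_smul, eq_comm] at hlin
      rw [← smul_zero A.trace⁻¹, ← hlin, smul_add, smul_smul, smul_smul, inv_mul_cancel₀ htr,
        div_eq_inv_mul]
    have hdet : ((1 : K) • A + ((B.det - A.det) / A.trace) • 1).det = 0 := by
      rw [hscalar, det_zero]
    exact (one_ne_zero (det_smul_add_smul_one_eq_zero hA hdet).1).elim
  · refine ⟨A.trace / B.trace, (B.det - A.det) / B.trace, ?_⟩
    calc B = B.trace⁻¹ • (B.trace • B) := by rw [smul_smul, inv_mul_cancel₀ hB, one_smul]
      _ = _ := by rw [hlin, smul_add, smul_smul, smul_smul, div_eq_inv_mul, div_eq_inv_mul]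

end Matrix

theorem sqrt_of_irreducible_charpoly_sq_general (p : ℕ) (hp : p.Prime)
    (A : Matrix (Fin 2) (Fin 2) (ZMod p)) (hirr : Irreducible A.charpoly)
    (htr : A.trace ≠ 0) (B : Matrix (Fin 2) (Fin 2) (ZMod p)) :
    B * B = A * A ↔ B = A ∨ B = -A := by
  have := Fact.mk hp
  have hA : ∀ c, ¬ A.charpoly.IsRoot c := fun _ ↦
    hirr.not_isRoot_of_natDegree_ne_one (by simp [Matrix.charpoly_natDegree_eq_dim])
  constructor
  · intro h
    obtain ⟨x, y, hB⟩ := Matrix.exists_eq_smul_add_smul_one_of_mul_self_eq hA htr h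
    exact Matrix.eq_or_eq_neg_of_mul_self_eq hA hB h
  · rintro (rfl | rfl)
    · rfl
    · exact neg_mul_neg A A

theorem sqrt_of_irreducible_charpoly_sq (p : ℕ) (hp : p.Prime) (hodd : Odd p)
    (A : Matrix (Fin 2) (Fin 2) (ZMod p)) (hirr : Irreducible A.charpoly)
    (htr : A.trace ≠ 0) (B : Matrix (Fin 2) (Fin 2) (ZMod p)) :
    B * B = A * A ↔ B = A ∨ B = -A :=
  sqrt_of_irreducible_charpoly_sq_general p hp A hirr htr B
end

section
/- Let p be an odd prime, let a ∈ ℤ/p be a non-square modulo p, and let φ = [[0,1],[a,0]] ∈ GL(2,p). Let C be the centralizer of φ in GL(2,p) and let S = {ψ ∈ GL(2,p) : ψ² = φ²}. Then the action of C on S by conjugation has exactly p orbits; the orbits of φ and of −φ are singletons, and each of the remaining p − 2 orbits has exactly p + 1 elements. -/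
/-!
Let `φ = !![0, 1; a, 0]`. Its centralizer in the matrix ring is the field `K = F[φ] ≅ F(√a)`,
and `τ = !![1, 0; 0, -1]` satisfies `τ Y = σ(Y) τ` for the Galois conjugation `σ` of `K`.
Every `ψ` with `ψ² = a` is `u φ + Y τ` with `u ∈ F`, `Y ∈ K` and `N(Y) = a (1 - u²)`.
Conjugation by `γ ∈ Kˣ` fixes `u = tr(φ ψ) / 2a` and replaces `Y` by `γ Y / σ(γ)`, which by
Hilbert 90 runs through all elements of norm `N(Y)`. So the orbits are the fibres of `u`, one for
each `u ∈ F`, and the orbit over `u` is in bijection with the conic `N(Y) = a (1 - u²)`: a single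
point when `u = ±1` (that is, `ψ = ±φ`), and `|F| + 1` points otherwise.
-/

open Matrix

namespace SquareRootsOfNonsquare

variable {F : Type*} [Field F] {a : F}

theorem ne_zero_of_not_isSquare (ha : ¬IsSquare a) : a ≠ 0 := by
  rintro rfl; exact ha .zero

theorem sq_sub_mul_sq_eq_zero_iff (ha : ¬IsSquare a) {x y : F} :
    x ^ 2 - a * y ^ 2 = 0 ↔ x = 0 ∧ y = 0 := by
  refine ⟨fun h => ?_, fun ⟨hx, hy⟩ => by simp [hx, hy]⟩
  obtain rfl : y = 0 := by
    by_contra hy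
    exact ha ⟨x / y, by field_simp; linear_combination -h⟩
  simpa using h

/-- The matrix `x + y φ`, where `φ = !![0, 1; a, 0]`. -/
def centralizerMat (a x y : F) : Matrix (Fin 2) (Fin 2) F := !![x, y; a * y, x]

/-- The matrix `u φ + (k + t φ) τ`, where `φ = !![0, 1; a, 0]` and `τ = !![1, 0; 0, -1]`;
since `τ` anticommutes with `φ`, its square is the scalar `a u² + (k² - a t²)`. -/
def rootMat (a u k t : F) : Matrix (Fin 2) (Fin 2) F := !![k, u - t; a * (u + t), -k]

theorem centralizerMat_mul_comm (x y : F) :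
    centralizerMat a x y * !![0, 1; a, 0] = !![0, 1; a, 0] * centralizerMat a x y := by
  ext i j; fin_cases i <;> fin_cases j <;> simp [centralizerMat] <;> ring

theorem det_centralizerMat (x y : F) : (centralizerMat a x y).det = x ^ 2 - a * y ^ 2 := by
  simp [centralizerMat, det_fin_two]; ring

theorem rootMat_mul_self (u k t : F) :
    rootMat a u k t * rootMat a u k t = (a * u ^ 2 + (k ^ 2 - a * t ^ 2)) • 1 := by
  ext i j; fin_cases i <;> fin_cases j <;> simp [rootMat] <;> ring

theorem det_rootMat (u k t : F) :
    (rootMat a u k t).det = -(a * u ^ 2 + (k ^ 2 - a * t ^ 2)) := by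
  simp [rootMat, det_fin_two]; ring

theorem det_rootMat_ne_zero (ha : a ≠ 0) {u k t : F} (h : k ^ 2 - a * t ^ 2 = a * (1 - u ^ 2)) :
    (rootMat a u k t).det ≠ 0 := by
  rw [det_rootMat, h]
  ring_nf
  exact neg_ne_zero.mpr ha

theorem trace_mul_rootMat (u k t : F) :
    trace (!![0, 1; a, 0] * rootMat a u k t) = 2 * a * u := by
  simp [rootMat, trace_fin_two]; ring

theorem rootMat_inj {u k t k' t' : F} :
    rootMat a u k t = rootMat a u k' t' ↔ k = k' ∧ t = t' := by
  refine ⟨fun h => ⟨by simpa [rootMat] using congrFun (congrFun h 0) 0, ?_⟩, ?_⟩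
  · simpa [rootMat] using congrFun (congrFun h 0) 1
  · rintro ⟨rfl, rfl⟩; rfl

theorem rootMat_zero_zero (u : F) : rootMat a u 0 0 = u • !![0, 1; a, 0] := by
  ext i j; fin_cases i <;> fin_cases j <;> simp [rootMat, mul_comm]

theorem exists_rootMat_eq (ha : ¬IsSquare a) (h2 : (2 : F) ≠ 0) {M : Matrix (Fin 2) (Fin 2) F}
    (hM : M * M = a • 1) : ∃ u k t, rootMat a u k t = M := by
  have e : ∀ i j, (M * M) i j = (a • 1 : Matrix (Fin 2) (Fin 2) F) i j := by simp [hM]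
  have e00 := e 0 0; have e01 := e 0 1; have e10 := e 1 0
  simp [mul_apply, Fin.sum_univ_two] at e00 e01 e10
  have ha0 : a ≠ 0 := ne_zero_of_not_isSquare ha
  have htr : M 1 1 = -M 0 0 := by
    by_contra hne
    have hs : M 0 0 + M 1 1 ≠ 0 := fun h => hne (by linear_combination h)
    have h01 : M 0 1 = 0 := (mul_eq_zero.mp (by linear_combination e01)).resolve_right hs
    have h10 : M 1 0 = 0 := (mul_eq_zero.mp (by linear_combination e10)).resolve_right hs
    exact ha ⟨M 0 0, by linear_combination -e00 + M 1 0 * h01⟩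
  refine ⟨(M 1 0 / a + M 0 1) / 2, M 0 0, (M 1 0 / a - M 0 1) / 2, ?_⟩
  ext i j; fin_cases i <;> fin_cases j <;> simp [rootMat, htr] <;> field_simp <;> ring

/-- With `Y = k + t φ` and `σ` the conjugation `φ ↦ -φ`, conjugating `rootMat a u k t` by
`γ = x + y φ` replaces `Y` by `γ Y / σ γ`. Given `N Y = N Y'`, the element `γ = Y' + σ Y` solves
`γ Y = Y' σ γ`; when it vanishes, `γ = φ σ Y` does. -/
theorem exists_centralizerMat_conj (ha : ¬IsSquare a) {u k t k' t' : F}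
    (h : k ^ 2 - a * t ^ 2 = k' ^ 2 - a * t' ^ 2) :
    ∃ x y, x ^ 2 - a * y ^ 2 ≠ 0 ∧
      centralizerMat a x y * rootMat a u k t = rootMat a u k' t' * centralizerMat a x y := by
  by_cases hγ : k' + k = 0 ∧ t' - t = 0
  · obtain ⟨hk, ht⟩ := hγ
    obtain rfl : k' = -k := by linear_combination hk
    obtain rfl : t = t' := by linear_combination -ht
    by_cases hY : k = 0 ∧ t = 0
    · obtain ⟨rfl, rfl⟩ := hY
      refine ⟨1, 0, by simp, ?_⟩
      ext i j; fin_cases i <;> fin_cases j <;> simp [centralizerMat, rootMat]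
    refine ⟨-(a * t), k, fun h0 => ?_, ?_⟩
    · have hN : a * (k ^ 2 - a * t ^ 2) = 0 := by linear_combination -h0
      exact hY ((sq_sub_mul_sq_eq_zero_iff ha).mp
        ((mul_eq_zero.mp hN).resolve_left (ne_zero_of_not_isSquare ha)))
    · ext i j; fin_cases i <;> fin_cases j <;> simp [centralizerMat, rootMat] <;> ring
  · refine ⟨k' + k, t' - t, mt (sq_sub_mul_sq_eq_zero_iff ha).mp hγ, ?_⟩
    ext i j; fin_cases i <;> fin_cases j <;> simp [centralizerMat, rootMat] <;>
      first | ring1 | linear_combination h | linear_combination -h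

abbrev NormFiber (a c : F) : Type _ := {v : F × F // v.1 ^ 2 - a * v.2 ^ 2 = c}

theorem card_normFiber_zero (ha : ¬IsSquare a) : Nat.card (NormFiber a 0) = 1 :=
  Nat.card_eq_one_iff_exists.mpr ⟨⟨0, by simp⟩, fun ⟨v, hv⟩ => by
    ext <;> simp [(sq_sub_mul_sq_eq_zero_iff ha).mp hv]⟩

section Finite

variable [Fintype F]

theorem exists_sq_sub_mul_sq_eq (hF : ringChar F ≠ 2) (ha : a ≠ 0) (c : F) :
    ∃ k t : F, k ^ 2 - a * t ^ 2 = c := by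
  open Polynomial in
  obtain ⟨k, t, h⟩ := FiniteField.exists_root_sum_quadratic
    (f := X ^ 2 - C c) (g := C (-a) * X ^ 2) (degree_X_pow_sub_C (by norm_num) c)
    (degree_C_mul_X_pow 2 (neg_ne_zero.mpr ha))
    (Nat.mod_two_ne_zero.mp (mt FiniteField.even_card_iff_char_two.mpr hF))
  exact ⟨k, t, by simp at h; linear_combination h⟩

/-- Multiplication by `k₀ + t₀ φ`, which multiplies norms by `k₀² - a t₀²`. -/
theorem card_normFiber_le_card_normFiber_mul {k₀ t₀ : F} (h₀ : k₀ ^ 2 - a * t₀ ^ 2 ≠ 0)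
    (c : F) : Nat.card (NormFiber a c) ≤ Nat.card (NormFiber a ((k₀ ^ 2 - a * t₀ ^ 2) * c)) := by
  refine Nat.card_le_card_of_injective
    (fun v => ⟨(k₀ * v.1.1 + a * t₀ * v.1.2, t₀ * v.1.1 + k₀ * v.1.2), by
      linear_combination (k₀ ^ 2 - a * t₀ ^ 2) * v.2⟩) fun v w hvw => ?_
  simp only [Subtype.mk.injEq, Prod.mk.injEq] at hvw
  obtain ⟨h₁, h₂⟩ := hvw
  have e₁ : (k₀ ^ 2 - a * t₀ ^ 2) * (v.1.1 - w.1.1) = 0 := by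
    linear_combination k₀ * h₁ - a * t₀ * h₂
  have e₂ : (k₀ ^ 2 - a * t₀ ^ 2) * (v.1.2 - w.1.2) = 0 := by
    linear_combination k₀ * h₂ - t₀ * h₁
  ext
  · exact sub_eq_zero.mp ((mul_eq_zero.mp e₁).resolve_left h₀)
  · exact sub_eq_zero.mp ((mul_eq_zero.mp e₂).resolve_left h₀)

theorem card_normFiber_eq_card_normFiber_one (hF : ringChar F ≠ 2) (ha : a ≠ 0) {c : F}
    (hc : c ≠ 0) : Nat.card (NormFiber a c) = Nat.card (NormFiber a 1) := by
  have hle : ∀ c d : F, c ≠ 0 → d ≠ 0 →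
      Nat.card (NormFiber a c) ≤ Nat.card (NormFiber a d) := by
    intro c d hc hd
    obtain ⟨k₀, t₀, h₀⟩ := exists_sq_sub_mul_sq_eq hF ha (d / c)
    have := card_normFiber_le_card_normFiber_mul (h₀ ▸ div_ne_zero hd hc) c
    rwa [h₀, div_mul_cancel₀ d hc] at this
  exact le_antisymm (hle c 1 hc one_ne_zero) (hle 1 c one_ne_zero hc)

/-- Summing over all fibers gives `q² = 1 + (q - 1) N` for `q = |F|`, where `N` is the common
size of the fibers over `c ≠ 0`. -/
theorem card_normFiber (hF : ringChar F ≠ 2) (ha : ¬IsSquare a) {c : F} (hc : c ≠ 0) :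
    Nat.card (NormFiber a c) = Fintype.card F + 1 := by
  classical
  have ha0 := ne_zero_of_not_isSquare ha
  rw [card_normFiber_eq_card_normFiber_one hF ha0 hc]
  have hsum : Nat.card (F × F) = ∑ c : F, Nat.card (NormFiber a c) := by
    rw [← Nat.card_sigma]; exact Nat.card_congr (Equiv.sigmaFiberEquiv _).symm
  rw [Fintype.sum_eq_add_sum_compl 0, card_normFiber_zero ha,
    Finset.sum_congr rfl fun c hc => card_normFiber_eq_card_normFiber_one hF ha0
      (Finset.mem_compl.mp hc |>.imp Finset.mem_singleton.mpr),
    Finset.sum_const, smul_eq_mul, Finset.card_compl, Finset.card_singleton,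
    Nat.card_prod, Nat.card_eq_fintype_card] at hsum
  have hq : 1 < Fintype.card F := Fintype.one_lt_card
  refine Nat.eq_of_mul_eq_mul_left (Nat.sub_pos_of_lt hq) ?_
  zify [hq.le] at hsum ⊢
  linear_combination -hsum

end Finite

theorem trace_mul_conj_of_commute {n R : Type*} [Fintype n] [DecidableEq n] [CommRing R]
    {φ γ : GL n R} (h : γ * φ = φ * γ) (ψ : GL n R) :
    ((φ * (γ * ψ * γ⁻¹) : GL n R) : Matrix n n R).trace =
      ((φ * ψ : GL n R) : Matrix n n R).trace := by
  rw [show φ * (γ * ψ * γ⁻¹) = γ * (φ * ψ) * γ⁻¹ by simp only [← mul_assoc, h],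
    Units.val_mul, Units.val_mul, trace_units_conj]

theorem card_conj_orbit_eq_one {M : Type*} [Monoid M] {P : Mˣ → Prop} {φ ψ : Mˣ} (hψ : P ψ)
    (hcomm : ∀ γ : Mˣ, γ * φ = φ * γ → γ * ψ = ψ * γ) :
    Nat.card {χ : {χ : Mˣ // P χ} // ∃ γ : Mˣ, γ * φ = φ * γ ∧ (χ.1 : M) = γ * ψ * γ⁻¹} = 1 := by
  refine Nat.card_eq_one_iff_exists.mpr ⟨⟨⟨ψ, hψ⟩, 1, by simp, by simp⟩, ?_⟩
  rintro ⟨⟨χ, hχ⟩, γ, hγ, hχγ⟩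
  ext1; ext1; ext1
  rw [hχγ, ← Units.val_mul, ← Units.val_mul, hcomm γ hγ, mul_inv_cancel_right]

section GeneralLinearGroup

variable {φ : GL (Fin 2) F}

theorem sq_eq_sq_iff_mul_self (hφ : (φ : Matrix (Fin 2) (Fin 2) F) = !![0, 1; a, 0])
    {ψ : GL (Fin 2) F} : ψ ^ 2 = φ ^ 2 ↔ (ψ : Matrix (Fin 2) (Fin 2) F) * ψ = a • 1 := by
  have hφφ : (φ : Matrix (Fin 2) (Fin 2) F) * φ = a • 1 := by
    rw [hφ]; ext i j; fin_cases i <;> fin_cases j <;> simp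
  rw [Units.ext_iff, sq, sq, Units.val_mul, Units.val_mul, hφφ]

theorem exists_rootMat_of_sq_eq (ha : ¬IsSquare a) (h2 : (2 : F) ≠ 0)
    (hφ : (φ : Matrix (Fin 2) (Fin 2) F) = !![0, 1; a, 0]) {ψ : GL (Fin 2) F}
    (hψ : ψ ^ 2 = φ ^ 2) :
    ∃ u k t, (ψ : Matrix (Fin 2) (Fin 2) F) = rootMat a u k t ∧
      k ^ 2 - a * t ^ 2 = a * (1 - u ^ 2) := by
  have hψψ := (sq_eq_sq_iff_mul_self hφ).mp hψ
  obtain ⟨u, k, t, hM⟩ := exists_rootMat_eq ha h2 hψψ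
  refine ⟨u, k, t, hM.symm, ?_⟩
  rw [← hM, rootMat_mul_self] at hψψ
  have h00 := congrFun (congrFun hψψ 0) 0
  simp at h00
  linear_combination h00

theorem mkOfDetNeZero_rootMat_sq (hφ : (φ : Matrix (Fin 2) (Fin 2) F) = !![0, 1; a, 0])
    {u k t : F} (h : k ^ 2 - a * t ^ 2 = a * (1 - u ^ 2)) (hdet : (rootMat a u k t).det ≠ 0) :
    GeneralLinearGroup.mkOfDetNeZero (rootMat a u k t) hdet ^ 2 = φ ^ 2 := by
  rw [sq_eq_sq_iff_mul_self hφ, GeneralLinearGroup.val_mkOfDetNeZero, rootMat_mul_self, h]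
  ring_nf

theorem exists_conj_iff_trace_eq (ha : ¬IsSquare a) (h2 : (2 : F) ≠ 0)
    (hφ : (φ : Matrix (Fin 2) (Fin 2) F) = !![0, 1; a, 0]) {ψ₁ ψ₂ : GL (Fin 2) F}
    (h₁ : ψ₁ ^ 2 = φ ^ 2) (h₂ : ψ₂ ^ 2 = φ ^ 2) :
    (∃ γ : GL (Fin 2) F, γ * φ = φ * γ ∧ ψ₂ = γ * ψ₁ * γ⁻¹) ↔
      ((φ * ψ₁ : GL (Fin 2) F) : Matrix (Fin 2) (Fin 2) F).trace =
        ((φ * ψ₂ : GL (Fin 2) F) : Matrix (Fin 2) (Fin 2) F).trace := by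
  refine ⟨fun ⟨γ, hγ, hψ⟩ => hψ ▸ (trace_mul_conj_of_commute hγ ψ₁).symm, fun htr => ?_⟩
  obtain ⟨u, k, t, hψ₁, hN₁⟩ := exists_rootMat_of_sq_eq ha h2 hφ h₁
  obtain ⟨u', k', t', hψ₂, hN₂⟩ := exists_rootMat_of_sq_eq ha h2 hφ h₂
  simp only [Units.val_mul, hφ, hψ₁, hψ₂, trace_mul_rootMat] at htr
  obtain rfl : u = u' := mul_left_cancel₀ (mul_ne_zero h2 (ne_zero_of_not_isSquare ha)) htr
  obtain ⟨x, y, hxy, hconj⟩ := exists_centralizerMat_conj ha (u := u) (hN₁.trans hN₂.symm)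
  refine ⟨GeneralLinearGroup.mkOfDetNeZero _ ((det_centralizerMat x y).trans_ne hxy), ?_, ?_⟩
  · ext1; simp [hφ, centralizerMat_mul_comm]
  · rw [eq_mul_inv_iff_mul_eq]; ext1; simp [hψ₁, hψ₂, hconj]

theorem card_trace_fiber (ha : ¬IsSquare a) (h2 : (2 : F) ≠ 0)
    (hφ : (φ : Matrix (Fin 2) (Fin 2) F) = !![0, 1; a, 0]) (u : F) :
    Nat.card {ψ : {ψ : GL (Fin 2) F // ψ ^ 2 = φ ^ 2} //
      ((φ * ψ.1 : GL (Fin 2) F) : Matrix (Fin 2) (Fin 2) F).trace = 2 * a * u} =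
      Nat.card (NormFiber a (a * (1 - u ^ 2))) := by
  have ha0 : a ≠ 0 := ne_zero_of_not_isSquare ha
  symm
  refine Nat.card_eq_of_bijective (fun v =>
    ⟨⟨GeneralLinearGroup.mkOfDetNeZero _ (det_rootMat_ne_zero ha0 v.2),
      mkOfDetNeZero_rootMat_sq hφ v.2 _⟩, by
      simp only [Units.val_mul, hφ, GeneralLinearGroup.val_mkOfDetNeZero, trace_mul_rootMat]⟩)
    ⟨fun v w hvw => ?_, ?_⟩
  · have := congrArg (fun ψ => (ψ.1.1 : Matrix (Fin 2) (Fin 2) F)) hvw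
    simp only [GeneralLinearGroup.val_mkOfDetNeZero, rootMat_inj] at this
    exact Subtype.ext (Prod.ext this.1 this.2)
  · rintro ⟨⟨ψ, hψ⟩, htr⟩
    obtain ⟨u', k, t, hψk, hN⟩ := exists_rootMat_of_sq_eq ha h2 hφ hψ
    simp only [Units.val_mul, hφ, hψk, trace_mul_rootMat] at htr
    obtain rfl : u' = u := mul_left_cancel₀ (mul_ne_zero h2 ha0) htr
    exact ⟨⟨(k, t), hN⟩, Subtype.ext (Subtype.ext (Units.ext hψk.symm))⟩

variable [Fintype F]

theorem card_quot_conj (hF : ringChar F ≠ 2) (ha : ¬IsSquare a)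
    (hφ : (φ : Matrix (Fin 2) (Fin 2) F) = !![0, 1; a, 0]) :
    Nat.card (Quot fun ψ₁ ψ₂ : {ψ : GL (Fin 2) F // ψ ^ 2 = φ ^ 2} =>
      ∃ γ : GL (Fin 2) F, γ * φ = φ * γ ∧ ψ₂.1 = γ * ψ₁.1 * γ⁻¹) = Fintype.card F := by
  have h2 : (2 : F) ≠ 0 := Ring.two_ne_zero hF
  have ha0 : a ≠ 0 := ne_zero_of_not_isSquare ha
  rw [← Nat.card_eq_fintype_card]
  refine Nat.card_eq_of_bijective (Quot.lift
    (fun ψ => ((φ * ψ.1 : GL (Fin 2) F) : Matrix (Fin 2) (Fin 2) F).trace)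
    fun ψ₁ ψ₂ => (exists_conj_iff_trace_eq ha h2 hφ ψ₁.2 ψ₂.2).mp) ⟨?_, fun c => ?_⟩
  · rintro ⟨ψ₁⟩ ⟨ψ₂⟩ htr
    exact Quot.sound ((exists_conj_iff_trace_eq ha h2 hφ ψ₁.2 ψ₂.2).mpr htr)
  · obtain ⟨k, t, hN⟩ := exists_sq_sub_mul_sq_eq hF ha0 (a * (1 - (c / (2 * a)) ^ 2))
    refine ⟨Quot.mk _ ⟨_, mkOfDetNeZero_rootMat_sq hφ hN (det_rootMat_ne_zero ha0 hN)⟩, ?_⟩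
    simp only [Units.val_mul, hφ, GeneralLinearGroup.val_mkOfDetNeZero, trace_mul_rootMat]
    field_simp

theorem card_conj_orbit (hF : ringChar F ≠ 2) (ha : ¬IsSquare a)
    (hφ : (φ : Matrix (Fin 2) (Fin 2) F) = !![0, 1; a, 0])
    (ψ₀ : {ψ : GL (Fin 2) F // ψ ^ 2 = φ ^ 2}) (hψ₀ : ψ₀.1 ≠ φ) (hψ₀' : ψ₀.1 ≠ -φ) :
    Nat.card {ψ : {ψ : GL (Fin 2) F // ψ ^ 2 = φ ^ 2} //
      ∃ γ : GL (Fin 2) F, γ * φ = φ * γ ∧ ψ.1.1 = γ * ψ₀.1 * γ⁻¹} = Fintype.card F + 1 := by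
  have h2 : (2 : F) ≠ 0 := Ring.two_ne_zero hF
  obtain ⟨u, k₀, t₀, hψk, hN⟩ := exists_rootMat_of_sq_eq ha h2 hφ ψ₀.2
  have hc : a * (1 - u ^ 2) ≠ 0 := by
    intro hc
    obtain ⟨rfl, rfl⟩ := (sq_sub_mul_sq_eq_zero_iff ha).mp (hN.trans hc)
    have hu : (u - 1) * (u + 1) = 0 := by
      linear_combination (-(mul_eq_zero.mp hc).resolve_left (ne_zero_of_not_isSquare ha))
    rcases mul_eq_zero.mp hu with hu | hu
    · exact hψ₀ (Units.ext (by rw [hψk, rootMat_zero_zero, hφ, sub_eq_zero.mp hu, one_smul]))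
    · exact hψ₀' (Units.ext (by rw [hψk, rootMat_zero_zero, Units.val_neg, hφ,
        eq_neg_of_add_eq_zero_left hu, neg_one_smul]))
  rw [← card_normFiber hF ha hc, ← card_trace_fiber ha h2 hφ u]
  have htr₀ : ((φ * ψ₀.1 : GL (Fin 2) F) : Matrix (Fin 2) (Fin 2) F).trace = 2 * a * u := by
    simp only [Units.val_mul, hφ, hψk, trace_mul_rootMat]
  refine Nat.card_congr (Equiv.subtypeEquivRight fun ψ => ?_)
  rw [← htr₀, eq_comm, ← exists_conj_iff_trace_eq ha h2 hφ ψ₀.2 ψ.2]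
  simp only [Units.ext_iff, Units.val_mul]

end GeneralLinearGroup

end SquareRootsOfNonsquare

open SquareRootsOfNonsquare in
theorem conjugation_orbits_on_square_roots (p : ℕ) (hp : p.Prime) (hodd : Odd p)
    (a : ZMod p) (ha : ¬ ∃ b : ZMod p, b ^ 2 = a)
    (φ : GL (Fin 2) (ZMod p))
    (hφ : (φ : Matrix (Fin 2) (Fin 2) (ZMod p)) = !![0, 1; a, 0]) :
    -- the conjugation action of the centralizer of φ on S = {ψ : ψ² = φ²} has exactly p orbits
    Nat.card (Quot fun ψ₁ ψ₂ : {ψ : GL (Fin 2) (ZMod p) // ψ ^ 2 = φ ^ 2} =>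
        ∃ γ : GL (Fin 2) (ZMod p), γ * φ = φ * γ ∧ ψ₂.1 = γ * ψ₁.1 * γ⁻¹) = p ∧
    -- the orbit of φ is a singleton
    Nat.card {ψ : {ψ : GL (Fin 2) (ZMod p) // ψ ^ 2 = φ ^ 2} //
        ∃ γ : GL (Fin 2) (ZMod p), γ * φ = φ * γ ∧ ψ.1.1 = γ * φ * γ⁻¹} = 1 ∧
    -- the orbit of -φ is a singleton
    Nat.card {ψ : {ψ : GL (Fin 2) (ZMod p) // ψ ^ 2 = φ ^ 2} //
        ∃ γ : GL (Fin 2) (ZMod p), γ * φ = φ * γ ∧ ψ.1.1 = γ * (-φ) * γ⁻¹} = 1 ∧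
    -- every other orbit has exactly p + 1 elements
    ∀ ψ₀ : {ψ : GL (Fin 2) (ZMod p) // ψ ^ 2 = φ ^ 2}, ψ₀.1 ≠ φ → ψ₀.1 ≠ -φ →
      Nat.card {ψ : {ψ : GL (Fin 2) (ZMod p) // ψ ^ 2 = φ ^ 2} //
          ∃ γ : GL (Fin 2) (ZMod p), γ * φ = φ * γ ∧ ψ.1.1 = γ * ψ₀.1 * γ⁻¹} = p + 1 := by
  have : Fact p.Prime := ⟨hp⟩
  have hF : ringChar (ZMod p) ≠ 2 := by
    rw [ZMod.ringChar_zmod_n]; rintro rfl; exact Nat.not_odd_iff_even.mpr even_two hodd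
  have ha' : ¬IsSquare a := fun ⟨r, hr⟩ => ha ⟨r, by rw [hr, sq]⟩
  refine ⟨?_, ?_, ?_, fun ψ₀ h₁ h₂ => ?_⟩
  · rw [card_quot_conj hF ha' hφ, ZMod.card]
  · exact card_conj_orbit_eq_one (P := fun ψ => ψ ^ 2 = φ ^ 2) rfl fun _ h => h
  · simpa only [Units.val_neg] using card_conj_orbit_eq_one (P := fun ψ => ψ ^ 2 = φ ^ 2)
      (neg_sq φ) fun γ h => by rw [mul_neg, neg_mul, h]
  · rw [card_conj_orbit hF ha' hφ ψ₀ h₁ h₂, ZMod.card]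
end

section
/- Let Q = Aff(G,+,φ,ψ,c) be an affine quasigroup over an abelian group G and let α be an equivalence relation on Q. Then α is a congruence of the quasigroup Q (i.e., α is compatible with the multiplication * and with both division operations of Q) if and only if there is a subgroup N ≤ G with φ(N) = N and ψ(N) = N such that for all a, b ∈ G, (a,b) ∈ α if and only if a − b ∈ N. -/
/-- The left division of the affine quasigroup: `a \ b` is the unique `x`
with `affOp φ ψ c a x = b`. -/
def affLdiv {G : Type*} [AddCommGroup G] (φ ψ : G ≃+ G) (c : G) : G → G → G :=
  fun a b => ψ.symm (b - φ a - c)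

/-- The right division of the affine quasigroup: `b / a` is the unique `x`
with `affOp φ ψ c x a = b`. -/
def affRdiv {G : Type*} [AddCommGroup G] (φ ψ : G ≃+ G) (c : G) : G → G → G :=
  fun b a => φ.symm (b - ψ a - c)

/-- `α` is a congruence of the quasigroup with multiplication `op`, left division `ld`
and right division `rd`: an equivalence relation compatible with all three operations. -/
def IsCongruence {Q : Type*} (op ld rd : Q → Q → Q) (α : Q → Q → Prop) : Prop :=
  Equivalence α ∧
  (∀ a b a' b', α a a' → α b b' → α (op a b) (op a' b')) ∧
  (∀ a b a' b', α a a' → α b b' → α (ld a b) (ld a' b')) ∧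
  (∀ a b a' b', α a a' → α b b' → α (rd a b) (rd a' b'))

/-- Congruences of an affine quasigroup correspond exactly to subgroups invariant
under both defining automorphisms. -/
theorem affine_congruence_iff_invariant_subgroup {G : Type*} [AddCommGroup G]
    (φ ψ : G ≃+ G) (c : G) (α : G → G → Prop) (hα : Equivalence α) :
    IsCongruence (affOp φ ψ c) (affLdiv φ ψ c) (affRdiv φ ψ c) α ↔
      ∃ N : AddSubgroup G,
        AddSubgroup.map (φ : G →+ G) N = N ∧ AddSubgroup.map (ψ : G →+ G) N = N ∧
        ∀ a b : G, α a b ↔ a - b ∈ N := by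
  constructor
  · rintro ⟨he, hop, hld, hrd⟩
    -- ψ-image, ψ-preimage, translation stability
    have hψ : ∀ u v, α u v → α (ψ u) (ψ v) := by
      intro u v h
      have e : ∀ w, affOp φ ψ c (φ.symm (-c)) w = ψ w := by
        intro w; simp only [affOp, AddEquiv.apply_symm_apply]; abel
      have := hop (φ.symm (-c)) u (φ.symm (-c)) v (he.refl _) h
      rwa [e, e] at this
    have hψ' : ∀ u v, α u v → α (ψ.symm u) (ψ.symm v) := by
      intro u v h
      have e : ∀ w, affLdiv φ ψ c (φ.symm (-c)) w = ψ.symm w := by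
        intro w; simp only [affLdiv, AddEquiv.apply_symm_apply]; congr 1; abel
      have := hld (φ.symm (-c)) u (φ.symm (-c)) v (he.refl _) h
      rwa [e, e] at this
    have hφ : ∀ u v, α u v → α (φ u) (φ v) := by
      intro u v h
      have e : ∀ w, affOp φ ψ c w (ψ.symm (-c)) = φ w := by
        intro w; simp only [affOp, AddEquiv.apply_symm_apply]; abel
      have := hop u (ψ.symm (-c)) v (ψ.symm (-c)) h (he.refl _)
      rwa [e, e] at this
    have hφ' : ∀ u v, α u v → α (φ.symm u) (φ.symm v) := by
      intro u v h
      have e : ∀ w, affRdiv φ ψ c w (ψ.symm (-c)) = φ.symm w := by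
        intro w; simp only [affRdiv, AddEquiv.apply_symm_apply]; congr 1; abel
      have := hrd u (ψ.symm (-c)) v (ψ.symm (-c)) h (he.refl _)
      rwa [e, e] at this
    have htr : ∀ t u v, α u v → α (u + t) (v + t) := by
      intro t u v h
      have e : ∀ w, affOp φ ψ c (φ.symm (t - c)) (ψ.symm w) = w + t := by
        intro w; simp only [affOp, AddEquiv.apply_symm_apply]; abel
      have := hop (φ.symm (t - c)) (ψ.symm u) (φ.symm (t - c)) (ψ.symm v)
        (he.refl _) (hψ' u v h)
      rwa [e, e] at this
    refine ⟨{ carrier := {x | α x 0}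
              zero_mem' := he.refl 0
              add_mem' := ?_
              neg_mem' := ?_ }, ?_, ?_, ?_⟩
    · intro x y hx hy
      have h1 := htr y x 0 hx
      rw [zero_add] at h1
      exact he.trans h1 hy
    · intro x hx
      have h1 := htr (-x) x 0 hx
      rw [zero_add, add_neg_cancel] at h1
      exact he.symm h1
    · apply le_antisymm
      · rintro x ⟨y, hy, rfl⟩
        have := hφ y 0 hy
        simpa using this
      · intro x hx
        refine ⟨φ.symm x, ?_, by simp⟩
        have := hφ' x 0 hx
        simpa using this
    · apply le_antisymm
      · rintro x ⟨y, hy, rfl⟩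
        have := hψ y 0 hy
        simpa using this
      · intro x hx
        refine ⟨ψ.symm x, ?_, by simp⟩
        have := hψ' x 0 hx
        simpa using this
    · intro a b
      constructor
      · intro h
        have := htr (-b) a b h
        rw [add_neg_cancel] at this
        simpa [sub_eq_add_neg] using this
      · intro h
        have := htr b (a - b) 0 h
        rw [zero_add, sub_add_cancel] at this
        exact this
  · rintro ⟨N, hφN, hψN, hN⟩
    have memφ : ∀ x, x ∈ N → φ x ∈ N := by
      intro x hx; rw [← hφN]; exact ⟨x, hx, rfl⟩
    have memψ : ∀ x, x ∈ N → ψ x ∈ N := by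
      intro x hx; rw [← hψN]; exact ⟨x, hx, rfl⟩
    have memφ' : ∀ x, x ∈ N → φ.symm x ∈ N := by
      intro x hx
      rw [← hφN] at hx
      obtain ⟨y, hy, rfl⟩ := hx
      simpa using hy
    have memψ' : ∀ x, x ∈ N → ψ.symm x ∈ N := by
      intro x hx
      rw [← hψN] at hx
      obtain ⟨y, hy, rfl⟩ := hx
      simpa using hy
    refine ⟨hα, ?_, ?_, ?_⟩
    · intro a b a' b' ha hb
      rw [hN] at ha hb ⊢
      have e : affOp φ ψ c a b - affOp φ ψ c a' b' = φ (a - a') + ψ (b - b') := by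
        simp only [affOp, map_sub]; abel
      rw [e]
      exact add_mem (memφ _ ha) (memψ _ hb)
    · intro a b a' b' ha hb
      rw [hN] at ha hb ⊢
      have e : affLdiv φ ψ c a b - affLdiv φ ψ c a' b' =
          ψ.symm ((b - b') - φ (a - a')) := by
        simp only [affLdiv, ← map_sub ψ.symm, map_sub φ]; congr 1; abel
      rw [e]
      exact memψ' _ (sub_mem hb (memφ _ ha))
    · intro a b a' b' ha hb
      rw [hN] at ha hb ⊢
      have e : affRdiv φ ψ c a b - affRdiv φ ψ c a' b' =
          φ.symm ((a - a') - ψ (b - b')) := by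
        simp only [affRdiv, ← map_sub φ.symm, map_sub ψ]; congr 1; abel
      rw [e]
      exact memφ' _ (sub_mem ha (memψ _ hb))
end

section
/- An affine quasigroup Q = Aff(G,+,φ,ψ,c) over an abelian group G is simple if and only if G contains no subgroup N with {0} ≠ N ≠ G satisfying φ(N) = N and ψ(N) = N. -/
theorem AddSubgroup.map_equiv_eq_self_iff {G : Type*} [AddGroup G] (e : G ≃+ G)
    (N : AddSubgroup G) :
    N.map (e : G →+ G) = N ↔ N ≤ N.comap (e : G →+ G) ∧ N ≤ N.comap (e.symm : G →+ G) := by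
  rw [le_antisymm_iff, AddSubgroup.map_le_iff_le_comap, AddSubgroup.map_equiv_eq_comap_symm]

namespace AddCon

variable {G : Type*} [AddGroup G] (r : AddCon G)

theorem rel_iff_sub_mem_addSubgroup {a b : G} : r a b ↔ a - b ∈ r.addSubgroup := by
  rw [mem_addSubgroup_iff]
  refine ⟨fun h => by simpa using r.sub h (r.refl b), fun h => by simpa using r.add h (r.refl b)⟩

theorem rel_map_iff_le_comap (f : G →+ G) :
    (∀ {a b}, r a b → r (f a) (f b)) ↔ r.addSubgroup ≤ r.addSubgroup.comap f := by
  refine ⟨fun h x hx => ?_, fun h a b hab => ?_⟩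
  · simpa [mem_addSubgroup_iff] using h (mem_addSubgroup_iff.1 hx)
  · rw [rel_iff_sub_mem_addSubgroup] at hab ⊢
    simpa using h hab

theorem addSubgroup_eq_bot_iff : r.addSubgroup = ⊥ ↔ ∀ a b, r a b ↔ a = b := by
  rw [AddSubgroup.eq_bot_iff_forall]
  refine ⟨fun h a b => ?_, fun h x hx => (h x 0).1 (mem_addSubgroup_iff.1 hx)⟩
  rw [rel_iff_sub_mem_addSubgroup]
  exact ⟨fun hab => sub_eq_zero.1 (h _ hab), fun hab => hab ▸ by simp⟩

theorem addSubgroup_eq_top_iff : r.addSubgroup = ⊤ ↔ ∀ a b, r a b := by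
  simp only [rel_iff_sub_mem_addSubgroup, AddSubgroup.eq_top_iff']
  exact ⟨fun h a b => h _, fun h x => by simpa using h x 0⟩

end AddCon

section Affine

variable {G : Type*} [AddCommGroup G] (φ ψ : G ≃+ G) (c : G)

theorem affOp_symm_sub_left (t x : G) : affOp φ ψ c (φ.symm (t - c)) x = ψ x + t := by
  simp only [affOp, AddEquiv.apply_symm_apply]
  abel

theorem affOp_symm_neg_right (x : G) : affOp φ ψ c x (ψ.symm (-c)) = φ x := by
  simp [affOp]

theorem affLdiv_symm_neg_left (x : G) : affLdiv φ ψ c (φ.symm (-c)) x = ψ.symm x := by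
  simp [affLdiv]

theorem affRdiv_symm_neg_right (x : G) : affRdiv φ ψ c x (ψ.symm (-c)) = φ.symm x := by
  simp [affRdiv]

end Affine

namespace IsCongruence

variable {G : Type*} [AddCommGroup G] {φ ψ : G ≃+ G} {c : G} {α : G → G → Prop}
  (h : IsCongruence (affOp φ ψ c) (affLdiv φ ψ c) (affRdiv φ ψ c) α)
include h

theorem rel_psi_add {a b : G} (t : G) (hab : α a b) : α (ψ a + t) (ψ b + t) := by
  simpa only [affOp_symm_sub_left] using h.2.1 _ _ _ _ (h.1.refl (φ.symm (t - c))) hab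

theorem rel_psi {a b : G} (hab : α a b) : α (ψ a) (ψ b) := by
  simpa using h.rel_psi_add 0 hab

theorem rel_phi {a b : G} (hab : α a b) : α (φ a) (φ b) := by
  simpa only [affOp_symm_neg_right] using h.2.1 _ _ _ _ hab (h.1.refl (ψ.symm (-c)))

theorem rel_psi_symm {a b : G} (hab : α a b) : α (ψ.symm a) (ψ.symm b) := by
  simpa only [affLdiv_symm_neg_left] using h.2.2.1 _ _ _ _ (h.1.refl (φ.symm (-c))) hab

theorem rel_phi_symm {a b : G} (hab : α a b) : α (φ.symm a) (φ.symm b) := by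
  simpa only [affRdiv_symm_neg_right] using h.2.2.2 _ _ _ _ hab (h.1.refl (ψ.symm (-c)))

theorem rel_add_right {a b : G} (t : G) (hab : α a b) : α (a + t) (b + t) := by
  simpa using h.rel_psi_add t (h.rel_psi_symm hab)

def toAddCon : AddCon G where
  r := α
  iseqv := h.1
  add' {a b x y} hab hxy :=
    h.1.trans (h.rel_add_right x hab) (by simpa only [add_comm b] using h.rel_add_right b hxy)

end IsCongruence

theorem isCongruence_aff_iff {G : Type*} [AddCommGroup G] (φ ψ : G ≃+ G) (c : G)
    (r : AddCon G) :
    IsCongruence (affOp φ ψ c) (affLdiv φ ψ c) (affRdiv φ ψ c) r ↔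
      r.addSubgroup.map (φ : G →+ G) = r.addSubgroup ∧
        r.addSubgroup.map (ψ : G →+ G) = r.addSubgroup := by
  simp only [AddSubgroup.map_equiv_eq_self_iff, ← AddCon.rel_map_iff_le_comap]
  refine ⟨fun h => ⟨⟨h.rel_phi, h.rel_phi_symm⟩, ⟨h.rel_psi, h.rel_psi_symm⟩⟩, ?_⟩
  rintro ⟨⟨hφ, hφ'⟩, ⟨hψ, hψ'⟩⟩
  refine ⟨r.iseqv, fun a b a' b' ha hb => ?_, fun a b a' b' ha hb => ?_,
    fun a b a' b' ha hb => ?_⟩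
  · exact r.add (r.add (hφ ha) (hψ hb)) (r.refl c)
  · exact hψ' (r.sub (r.sub hb (hφ ha)) (r.refl c))
  · exact hφ' (r.sub (r.sub ha (hψ hb)) (r.refl c))

/-- An affine quasigroup is simple iff the group has no proper nontrivial subgroup
invariant under both defining automorphisms. -/
theorem affine_simple_iff_no_invariant_subgroup {G : Type*} [AddCommGroup G]
    (φ ψ : G ≃+ G) (c : G) :
    (∀ α : G → G → Prop,
        IsCongruence (affOp φ ψ c) (affLdiv φ ψ c) (affRdiv φ ψ c) α →
          (∀ a b : G, α a b ↔ a = b) ∨ (∀ a b : G, α a b)) ↔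
      ¬ ∃ N : AddSubgroup G, N ≠ ⊥ ∧ N ≠ ⊤ ∧
          AddSubgroup.map (φ : G →+ G) N = N ∧ AddSubgroup.map (ψ : G →+ G) N = N := by
  constructor
  · rintro hsimple ⟨N, hbot, htop, hφ, hψ⟩
    set r := QuotientAddGroup.con N
    rw [← AddCon.addSubgroup_quotientAddGroupCon N] at hbot htop hφ hψ
    rcases hsimple r ((isCongruence_aff_iff φ ψ c r).2 ⟨hφ, hψ⟩) with hid | hfull
    · exact hbot ((AddCon.addSubgroup_eq_bot_iff r).2 hid)
    · exact htop ((AddCon.addSubgroup_eq_top_iff r).2 hfull)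
  · intro hno α hα
    set r := hα.toAddCon
    obtain ⟨hφ, hψ⟩ := (isCongruence_aff_iff φ ψ c r).1 hα
    by_cases hbot : r.addSubgroup = ⊥
    · exact Or.inl ((AddCon.addSubgroup_eq_bot_iff r).1 hbot)
    · refine Or.inr ((AddCon.addSubgroup_eq_top_iff r).1 ?_)
      by_contra htop
      exact hno ⟨_, hbot, htop, hφ, hψ⟩
end
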